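/- arXiv:2409.17748 — 4 statements merged into one kernel-verified Lean document; each statement's English description precedes it below -/
import Mathlib

section
/- There exists a meager subset of the Baire space ℤ^ω that does not belong to the ideal M₋; in other words, M ⊄ M₋. -/
open Pointwise Filter

/-- The length-`n` initial segment of `x : ℕ → ℤ`, as a finite sequence. -/
def res (x : ℕ → ℤ) (n : ℕ) : List ℤ := List.ofFn (fun i : Fin n => x (i : ℕ))

/-- A tree on `ℤ`: a set of finite integer sequences closed under initial segments. -/
def IsTree (T : Set (List ℤ)) : Prop := ∀ σ ∈ T, ∀ τ, τ <+: σ → τ ∈ T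

/-- The set of infinite branches of a tree. -/
def branches (T : Set (List ℤ)) : Set (ℕ → ℤ) := {x | ∀ n, res x n ∈ T}

/-- `σ` is a splitting node of `T` (at least two immediate successors). -/
def Splits (T : Set (List ℤ)) (σ : List ℤ) : Prop :=
  ∃ i j : ℤ, i ≠ j ∧ σ ++ [i] ∈ T ∧ σ ++ [j] ∈ T

/-- `σ` is an ω-splitting node of `T` (infinitely many immediate successors). -/
def OmegaSplits (T : Set (List ℤ)) (σ : List ℤ) : Prop :=
  {i : ℤ | σ ++ [i] ∈ T}.Infinite

/-- Perfect tree: a nonempty tree in which every node has a splitting extension. -/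
def IsPerfect (T : Set (List ℤ)) : Prop :=
  IsTree T ∧ T.Nonempty ∧ ∀ σ ∈ T, ∃ τ ∈ T, σ <+: τ ∧ Splits T τ

/-- Uniformly perfect tree: perfect, and on every level either all nodes split
or none do. -/
def IsUniformlyPerfect (T : Set (List ℤ)) : Prop :=
  IsPerfect T ∧ ∀ n : ℕ,
    (∀ σ ∈ T, σ.length = n → Splits T σ) ∨ (∀ σ ∈ T, σ.length = n → ¬ Splits T σ)

/-- Miller tree: a nonempty tree in which every node has an ω-splitting extension. -/
def IsMiller (T : Set (List ℤ)) : Prop :=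
  IsTree T ∧ T.Nonempty ∧ ∀ σ ∈ T, ∃ τ ∈ T, σ <+: τ ∧ OmegaSplits T τ

/-- Laver tree: a tree with a stem `σ` such that every node is an initial
segment of the stem, or extends it and is ω-splitting. -/
def IsLaver (T : Set (List ℤ)) : Prop :=
  IsTree T ∧ ∃ σ ∈ T, ∀ τ ∈ T, τ <+: σ ∨ (σ <+: τ ∧ OmegaSplits T τ)

/-- The ω-Silver tree with parameters `A` (set of free coordinates) and `xT`. -/
def silverTree (A : Set ℕ) (xT : ℕ → ℤ) : Set (List ℤ) :=
  {σ : List ℤ | ∀ n (h : n < σ.length), n ∉ A → σ.get ⟨n, h⟩ = xT n}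

/-- ω-Silver tree: `σ ∈ T` iff `σ` agrees with `xT` outside an infinite set `A`. -/
def IsOmegaSilver (T : Set (List ℤ)) : Prop :=
  ∃ A : Set ℕ, A.Infinite ∧ ∃ xT : ℕ → ℤ, T = silverTree A xT

/-- Membership in the σ-ideal `M₋`: `F` is covered by a set of the form
`{x : ∀∞ n, x↾Iₙ ≠ x_A↾Iₙ}` where the consecutive intervals `Iₙ = [a n, a (n+1))`
(`a` strictly monotone, `a 0 = 0`) partition `ω`. -/
def MemMminus (F : Set (ℕ → ℤ)) : Prop :=
  ∃ xA : ℕ → ℤ, ∃ a : ℕ → ℕ, a 0 = 0 ∧ StrictMono a ∧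
    F ⊆ {x | ∀ᶠ n in Filter.atTop, ∃ k, a n ≤ k ∧ k < a (n + 1) ∧ x k ≠ xA k}

/-- Membership in the ideal `nwd₋` generated by the sets
`{x : ∀ n, x↾Iₙ ≠ x_A↾Iₙ}`: `F` is covered by finitely many generators. -/
def MemNwdMinus (F : Set (ℕ → ℤ)) : Prop :=
  ∃ (m : ℕ) (xA : Fin m → ℕ → ℤ) (a : Fin m → ℕ → ℕ),
    (∀ i, a i 0 = 0 ∧ StrictMono (a i)) ∧
    F ⊆ ⋃ i, {x | ∀ n, ∃ k, a i n ≤ k ∧ k < a i (n + 1) ∧ x k ≠ xA i k}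

/-- The basic clopen set `[σ]` of all extensions of `σ`. -/
def cyl (σ : List ℤ) : Set (ℕ → ℤ) := {x | res x σ.length = σ}

/-- Fake null set: for every `ε > 0` it is covered by countably many cylinders
`[σₙ]` with `Σₙ 2^{-|σₙ|} < ε`. -/
def IsFakeNull (F : Set (ℕ → ℤ)) : Prop :=
  ∀ ε : ℝ, 0 < ε → ∃ σ : ℕ → List ℤ,
    Summable (fun n => (1 : ℝ) / 2 ^ (σ n).length) ∧
    (∑' n, (1 : ℝ) / 2 ^ (σ n).length) < ε ∧
    F ⊆ ⋃ n, cyl (σ n)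

/-- `iterSum F B n` is the algebraic sum `F + B + B + ⋯ + B` (`n` copies of `B`). -/
def iterSum (F B : Set (ℕ → ℤ)) : ℕ → Set (ℕ → ℤ)
  | 0 => F
  | n + 1 => iterSum F B n + B

def codeW (r : ℕ) (w : List ℤ) : ℤ := 2 * ((Encodable.encode (r, w) : ℤ) + 1)

noncomputable def decodeW (z : ℤ) : Option (List ℤ) :=
  if 0 < z ∧ 2 ∣ z then some (Denumerable.ofNat (ℕ × List ℤ) (z.toNat / 2 - 1)).2 else none

lemma decodeW_codeW (r : ℕ) (w : List ℤ) : decodeW (codeW r w) = some w := by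
  have h1 : (0:ℤ) < codeW r w ∧ 2 ∣ codeW r w := by
    constructor
    · unfold codeW; positivity
    · exact ⟨_, rfl⟩
  rw [decodeW, if_pos h1]
  have h2 : (codeW r w).toNat = 2 * (Encodable.encode (r, w) + 1) := by
    unfold codeW
    rw [show (2 * ((Encodable.encode (r, w) : ℤ) + 1)) = ((2 * (Encodable.encode (r, w) + 1) : ℕ) : ℤ) by push_cast; ring]
    exact Int.toNat_natCast _
  rw [h2]
  have h3 : 2 * (Encodable.encode (r, w) + 1) / 2 - 1 = Encodable.encode (r, w) := by omega
  rw [h3, Denumerable.ofNat_encode]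

lemma decodeW_odd {z : ℤ} (h : ¬ 2 ∣ z) : decodeW z = none := by
  rw [decodeW, if_neg]; tauto

lemma codeW_ne (w : List ℤ) (v : ℤ) : codeW 0 w ≠ v ∨ codeW 1 w ≠ v := by
  by_contra h
  push_neg at h
  have : codeW 0 w = codeW 1 w := by rw [h.1, h.2]
  unfold codeW at this
  have h2 : Encodable.encode ((0:ℕ), w) = Encodable.encode ((1:ℕ), w) := by
    have := this
    omega
  exact absurd (Encodable.encode_injective h2) (by simp)

def WActive (σ : List ℤ) (i : ℕ) : Prop :=
  i < σ.length ∧ ∃ w, decodeW (σ.getD i 0) = some w ∧ σ.length ≤ i + w.length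

open Classical in
noncomputable def HH (σ : List ℤ) : ℤ :=
  if h : ∃ i, WActive σ i then
    ((decodeW (σ.getD (Nat.find h) 0)).getD []).getD (σ.length - 1 - Nat.find h) 0 + 1
  else 0

def CC : Set (ℕ → ℤ) := {x | ∀ n, x n ≠ HH (res x n)}

lemma res_congr {x y : ℕ → ℤ} {n : ℕ} (h : ∀ i < n, x i = y i) : res x n = res y n :=
by
  unfold res
  exact congrArg List.ofFn (funext fun i : Fin n => h i i.2)

lemma res_succ (x : ℕ → ℤ) (n : ℕ) : res x (n+1) = res x n ++ [x n] := by
  rw [res, List.ofFn_succ']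
  simp [res, List.concat_eq_append]

lemma res_length (x : ℕ → ℤ) (n : ℕ) : (res x n).length = n := by simp [res]

lemma res_getD (x : ℕ → ℤ) {i n : ℕ} (h : i < n) : (res x n).getD i 0 = x i := by
  rw [List.getD_eq_getElem _ _ (by simpa [res_length] using h)]
  simp [res]

lemma isOpen_CC_compl : IsOpen CCᶜ := by
  have : CCᶜ = ⋃ n, {x : ℕ → ℤ | x n = HH (res x n)} := by
    ext x; simp [CC]
  rw [this]
  refine isOpen_iUnion fun n => ?_
  rw [isOpen_iff_mem_nhds]
  intro x hx
  have hV : (⋂ i ∈ Finset.range (n+1), {y : ℕ → ℤ | y i = x i}) ∈ nhds x := by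
    refine (Filter.biInter_finset_mem _).2 fun i _ => ?_
    exact ((isOpen_discrete {x i}).preimage (continuous_apply (A := fun _ : ℕ => ℤ) i)).mem_nhds rfl
  refine Filter.mem_of_superset hV ?_
  intro y hy
  simp only [Set.mem_iInter, Finset.mem_range, Set.mem_setOf_eq] at hy ⊢
  have h1 : res y n = res x n := res_congr fun i hi => hy i (by omega)
  rw [h1, hy n (by omega)]
  exact hx

lemma dense_CC_compl : Dense CCᶜ := by
  rw [dense_iff_inter_open]
  intro U hU ⟨x, hxU⟩
  obtain ⟨I, u, hu, hsub⟩ := isOpen_pi_iff.1 hU x hxU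
  set m := I.sup id + 1 with hm
  set y : ℕ → ℤ := fun k => if k = m then HH (res x m) else x k with hy
  refine ⟨y, hsub ?_, ?_⟩
  · intro i hi
    have him : i ≠ m := by
      have : i ≤ I.sup id := Finset.le_sup (f := id) hi
      omega
    simpa [hy, him] using (hu i hi).2
  · simp only [Set.mem_compl_iff, CC, Set.mem_setOf_eq, not_forall, not_not]
    refine ⟨m, ?_⟩
    have : res y m = res x m := res_congr fun i hi => by simp [hy]; omega
    rw [this]; simp [hy]

lemma isMeagre_CC : IsMeagre CC := by
  have := residual_of_dense_open isOpen_CC_compl dense_CC_compl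
  simpa [IsMeagre] using this

def wd (xA : ℕ → ℤ) (p q : ℕ) : List ℤ := List.ofFn (fun i : Fin (q - p) => xA (p + (i : ℕ)))

lemma wd_length (xA : ℕ → ℤ) (p q : ℕ) : (wd xA p q).length = q - p := by simp [wd]

lemma wd_getD (xA : ℕ → ℤ) {p q k : ℕ} (h : k < q - p) : (wd xA p q).getD k 0 = xA (p + k) := by
  rw [List.getD_eq_getElem _ _ (by simpa [wd_length] using h)]
  simp [wd]

structure Good (xA : ℕ → ℤ) (p q : ℕ → ℕ) : Prop where
  hp0 : 1 ≤ p 0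
  hpq : ∀ j, p j < q j
  hgap : ∀ j, q j < p (j+1)
  htrap : ∀ j i w, i < q j → decodeW (xA i) = some w → i + w.length < p (j+1)

lemma Good.pmono {xA : ℕ → ℤ} {p q : ℕ → ℕ} (G : Good xA p q) : StrictMono p :=
  strictMono_nat_of_lt_succ fun j => (G.hpq j).trans (G.hgap j)

lemma Good.qmono {xA : ℕ → ℤ} {p q : ℕ → ℕ} (G : Good xA p q) : StrictMono q :=
  strictMono_nat_of_lt_succ fun j => (G.hgap j).trans (G.hpq (j+1))

lemma Good.q_le_p {xA : ℕ → ℤ} {p q : ℕ → ℕ} (G : Good xA p q) {l j : ℕ} (h : l < j) :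
    q l < p j := lt_of_lt_of_le (G.hgap l) (G.pmono.monotone h)

open Classical in
/-- the value of the constructed point at position `n`, given its past `σ`. -/
noncomputable def val (xA : ℕ → ℤ) (p q : ℕ → ℕ) (n : ℕ) (σ : List ℤ) : ℤ :=
  if ∃ j, p j ≤ n ∧ n < q j then xA n
  else if h : ∃ j, n + 1 = p j then
    (if codeW 0 (wd xA (p h.choose) (q h.choose)) = HH σ then
      codeW 1 (wd xA (p h.choose) (q h.choose))
     else codeW 0 (wd xA (p h.choose) (q h.choose)))
  else if HH σ = 1 then 3 else 1

noncomputable def xL (xA : ℕ → ℤ) (p q : ℕ → ℕ) : ℕ → List ℤ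
  | 0 => []
  | n+1 => xL xA p q n ++ [val xA p q n (xL xA p q n)]

noncomputable def xx (xA : ℕ → ℤ) (p q : ℕ → ℕ) (n : ℕ) : ℤ := val xA p q n (xL xA p q n)

lemma res_xx (xA : ℕ → ℤ) (p q : ℕ → ℕ) (n : ℕ) : res (xx xA p q) n = xL xA p q n := by
  induction n with
  | zero => simp [res, xL]
  | succ n ih => rw [res_succ, ih]; rfl

section Main

variable {xA : ℕ → ℤ} {p q : ℕ → ℕ}

lemma xx_copied (xA : ℕ → ℤ) (p q : ℕ → ℕ) {n j : ℕ} (h1 : p j ≤ n) (h2 : n < q j) :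
    xx xA p q n = xA n := by
  rw [xx, val, if_pos ⟨j, h1, h2⟩]

lemma instr_not_copied (G : Good xA p q) {n j : ℕ} (hn : n + 1 = p j) :
    ¬ ∃ l, p l ≤ n ∧ n < q l := by
  rintro ⟨l, h1, h2⟩
  rcases lt_trichotomy l j with h | h | h
  · exact absurd (G.q_le_p h) (by omega)
  · subst h; omega
  · exact absurd (G.pmono h) (by omega)

lemma xx_instr (G : Good xA p q) {n j : ℕ} (hn : n + 1 = p j) :
    decodeW (xx xA p q n) = some (wd xA (p j) (q j)) ∧
      xx xA p q n ≠ HH (res (xx xA p q) n) := by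
  have hnc := instr_not_copied G hn
  have hh : ∃ l, n + 1 = p l := ⟨j, hn⟩
  have hcj : hh.choose = j := G.pmono.injective (by rw [← hh.choose_spec, hn])
  rw [res_xx, xx, val, if_neg hnc, dif_pos hh, hcj]
  rcases codeW_ne (wd xA (p j) (q j)) (HH (xL xA p q n)) with hne | hne
  · rw [if_neg hne]
    exact ⟨decodeW_codeW _ _, hne⟩
  · by_cases he : codeW 0 (wd xA (p j) (q j)) = HH (xL xA p q n)
    · rw [if_pos he]
      exact ⟨decodeW_codeW _ _, hne⟩
    · rw [if_neg he]
      exact ⟨decodeW_codeW _ _, he⟩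

lemma xx_junk (xA : ℕ → ℤ) (p q : ℕ → ℕ) {n : ℕ} (hnc : ¬ ∃ l, p l ≤ n ∧ n < q l)
    (hni : ¬ ∃ l, n + 1 = p l) :
    ¬ (2 ∣ xx xA p q n) ∧ xx xA p q n ≠ HH (res (xx xA p q) n) := by
  rw [res_xx, xx, val, if_neg hnc, dif_neg hni]
  by_cases he : HH (xL xA p q n) = 1
  · rw [if_pos he, he]; exact ⟨by decide, by decide⟩
  · rw [if_neg he]; exact ⟨by decide, fun h => he h.symm⟩

lemma HH_copied (G : Good xA p q) {n j : ℕ} (h1 : p j ≤ n) (h2 : n < q j) :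
    HH (res (xx xA p q) n) = xA n + 1 := by
  classical
  set x := xx xA p q with hx
  set σ := res x n with hσ
  have hlen : σ.length = n := res_length x n
  have hp1 : 1 ≤ p j := le_trans G.hp0 (G.pmono.monotone (Nat.zero_le j))
  set i₀ := p j - 1 with hi₀
  have hi₀p : i₀ + 1 = p j := by omega
  have hi₀n : i₀ < n := by omega
  have hinstr := xx_instr G hi₀p
  have hact : WActive σ i₀ := by
    refine ⟨by omega, wd xA (p j) (q j), ?_, ?_⟩
    · rw [hσ, res_getD x hi₀n]; exact hinstr.1
    · rw [hlen, wd_length]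
      have := G.hpq j
      omega
  have hmin : ∀ i, i < i₀ → ¬ WActive σ i := by
    rintro i hii ⟨hilen, w, hdec, hwin⟩
    rw [hlen] at hwin
    have hin : i < n := by omega
    rw [hσ, res_getD x hin] at hdec
    by_cases hc : ∃ l, p l ≤ i ∧ i < q l
    · obtain ⟨l, hl1, hl2⟩ := hc
      have hlj : l < j := by
        by_contra hlj
        exact absurd (G.pmono.monotone (not_lt.1 hlj)) (by omega)
      have hj1 : 1 ≤ j := by omega
      rw [hx, xx_copied xA p q hl1 hl2] at hdec
      have hiq : i < q (j-1) := lt_of_lt_of_le hl2 (G.qmono.monotone (by omega))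
      have := G.htrap (j-1) i w hiq hdec
      rw [show j - 1 + 1 = j by omega] at this
      omega
    · by_cases hinstr' : ∃ l, i + 1 = p l
      · obtain ⟨l, hl⟩ := hinstr'
        have hd2 := (xx_instr G hl).1
        rw [← hx] at hd2
        rw [hd2] at hdec
        have hw : w = wd xA (p l) (q l) := by injection hdec.symm
        have hlj : l < j := by
          have : p l < p j := by omega
          exact G.pmono.lt_iff_lt.1 this
        have hql : q l < p j := G.q_le_p hlj
        rw [hw, wd_length] at hwin
        have := G.hpq l
        omega
      · have := (xx_junk xA p q hc hinstr').1
        rw [← hx] at this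
        rw [decodeW_odd this] at hdec
        cases hdec
  have hex : ∃ i, WActive σ i := ⟨i₀, hact⟩
  rw [HH, dif_pos hex]
  have hfind : Nat.find hex = i₀ := (Nat.find_eq_iff hex).2 ⟨hact, hmin⟩
  rw [hfind, hσ, res_getD x hi₀n, ← hσ, hinstr.1]
  rw [hlen, Option.getD_some]
  have hidx : n - 1 - i₀ = n - p j := by omega
  rw [hidx, wd_getD xA (by have := G.hpq j; omega)]
  congr 2
  omega

lemma xx_mem_CC (G : Good xA p q) : xx xA p q ∈ CC := by
  intro n
  by_cases hc : ∃ l, p l ≤ n ∧ n < q l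
  · obtain ⟨l, h1, h2⟩ := hc
    rw [xx_copied xA p q h1 h2, HH_copied G h1 h2]
    omega
  · by_cases hinstr : ∃ l, n + 1 = p l
    · obtain ⟨l, hl⟩ := hinstr
      exact (xx_instr G hl).2
    · exact (xx_junk xA p q hc hinstr).2

end Main

/-- There exists a meager subset of `ℤ^ω` that does not belong to `M₋`. -/
theorem stmt0 : ∃ F : Set (ℕ → ℤ), IsMeagre F ∧ ¬ MemMminus F := by
  refine ⟨CC, isMeagre_CC, ?_⟩
  rintro ⟨xA, a, ha0, hmono, hsub⟩
  -- trap bound function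
  obtain ⟨B, hB⟩ : ∃ B : ℕ → ℕ, ∀ m i w, i < m → decodeW (xA i) = some w →
      i + w.length < B m := by
    refine ⟨fun m => (Finset.range m).sup
      (fun t => t + ((decodeW (xA t)).getD []).length + 1), ?_⟩
    intro m i w hi hdec
    have := Finset.le_sup (f := fun t => t + ((decodeW (xA t)).getD []).length + 1)
      (Finset.mem_range.2 hi)
    simp only [hdec, Option.getD_some] at this
    simp only []
    omega
  -- index sequence
  obtain ⟨N, hN0, hNs⟩ : ∃ N : ℕ → ℕ, N 0 = 1 ∧
      ∀ j, N (j+1) = B (a (N j + 1)) + N j + 2 :=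
    ⟨fun j => Nat.rec 1 (fun _ prev => B (a (prev + 1)) + prev + 2) j, rfl, fun _ => rfl⟩
  have hNmono : StrictMono N := strictMono_nat_of_lt_succ fun j => by rw [hNs]; omega
  set p : ℕ → ℕ := fun j => a (N j) with hp
  set q : ℕ → ℕ := fun j => a (N j + 1) with hq
  have G : Good xA p q := by
    refine ⟨?_, ?_, ?_, ?_⟩
    · show 1 ≤ a (N 0)
      rw [hN0]
      have := hmono (show 0 < 1 by omega)
      omega
    · intro j; exact hmono (by omega)
    · intro j
      refine hmono ?_
      rw [hNs]
      omega
    · intro j i w hiq hdec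
      have h1 := hB (a (N j + 1)) i w hiq hdec
      have h2 : N (j+1) ≤ a (N (j+1)) := hmono.le_apply
      rw [hNs] at h2
      show i + w.length < a (N (j+1))
      rw [hNs]
      omega
  have hev := hsub (xx_mem_CC G)
  simp only [Set.mem_setOf_eq] at hev
  have hfr : ∃ᶠ n in Filter.atTop, ¬ ∃ k, a n ≤ k ∧ k < a (n + 1) ∧ xx xA p q k ≠ xA k := by
    rw [Filter.frequently_atTop]
    intro b
    refine ⟨N b, hNmono.le_apply, ?_⟩
    rintro ⟨k, h1, h2, h3⟩
    exact h3 (xx_copied xA p q (j := b) h1 h2)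
  exact (hfr.and_eventually hev).exists.elim fun n hn => hn.1 hn.2
end

section
/- For every set F ∈ M₋ and every perfect tree T ⊆ ℤ^{<ω} there exists a perfect tree T' ⊆ T such that for every n ≥ 1 the n-fold sum F + [T'] + [T'] + ⋯ + [T'] belongs to M₋; moreover, if T is uniformly perfect then T' can be chosen uniformly perfect. -/
open Pointwise Filter

namespace Stmt3Aux

theorem res_length (x : ℕ → ℤ) (n : ℕ) : (res x n).length = n := by simp [res]

theorem res_getD (x : ℕ → ℤ) {n k : ℕ} (h : k < n) : (res x n).getD k 0 = x k := by
  rw [List.getD_eq_getElem _ _ (by simpa [res_length] using h)]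
  simp [res]

theorem take_of_prefix {u w : List ℤ} (h : u <+: w) {k : ℕ} (hk : k ≤ u.length) :
    w.take k = u.take k := by
  have h1 : u = w.take u.length := List.prefix_iff_eq_take.1 h
  rw [h1, List.take_take, min_eq_left hk]

theorem eq_of_prefix_length {u w : List ℤ} (h : u <+: w) (hk : u.length = w.length) :
    u = w := by
  have h1 : u = w.take u.length := List.prefix_iff_eq_take.1 h
  rw [h1, hk, List.take_length]

theorem getD_of_prefix {u w : List ℤ} (h : u <+: w) {k : ℕ} (hk : k < u.length) :
    u.getD k 0 = w.getD k 0 := by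
  obtain ⟨s, rfl⟩ := h
  rw [List.getD_eq_getElem _ _ hk, List.getD_eq_getElem _ _ (by simp; omega)]
  exact (List.getElem_append_left hk).symm

theorem getD_take (u : List ℤ) {m k : ℕ} (hk : k < m) :
    (u.take m).getD k 0 = u.getD k 0 := by
  by_cases h : k < u.length
  · rw [List.getD_eq_getElem _ _ (by rw [List.length_take]; omega), List.getD_eq_getElem _ _ h]
    exact List.getElem_take
  · rw [List.getD_eq_default _ _ (by rw [List.length_take]; omega), List.getD_eq_default _ _ (by omega)]

theorem take_getD_prefix (u : List ℤ) {d : ℕ} (h : d < u.length) :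
    u.take d ++ [u.getD d 0] <+: u := by
  have : u.take d ++ [u.getD d 0] = u.take (d+1) := by
    rw [List.take_succ, List.getD_eq_getElem _ _ h]
    simp [List.getElem?_eq_getElem h]
  rw [this]; exact List.take_prefix _ _

theorem prefix_singleton_parts {σ w : List ℤ} {i : ℤ} (h : σ ++ [i] <+: w) :
    w.take σ.length = σ ∧ w.getD σ.length 0 = i := by
  constructor
  · rw [take_of_prefix h (by simp), List.take_left]
  · rw [← getD_of_prefix h (by simp)]
    rw [List.getD_eq_getElem _ _ (by simp)]
    simp

theorem exists_length_succ {T : Set (List ℤ)} (hT : IsPerfect T) {ρ : List ℤ} (hρ : ρ ∈ T) :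
    ∃ τ ∈ T, ρ <+: τ ∧ τ.length = ρ.length + 1 := by
  obtain ⟨τ, hτT, hpre, i, j, hij, hi, hj⟩ := hT.2.2 ρ hρ
  have h1 : ρ <+: τ ++ [i] := hpre.trans (List.prefix_append _ _)
  refine ⟨(τ ++ [i]).take (ρ.length+1), hT.1 _ hi _ (List.take_prefix _ _), ?_, ?_⟩
  · have h2 : (τ ++ [i]).take ρ.length = ρ := by
      rw [take_of_prefix h1 le_rfl, List.take_length]
    have h3 : (τ ++ [i]).take ρ.length <+: (τ ++ [i]).take (ρ.length+1) :=
      List.take_prefix_take_left (Nat.le_succ ρ.length)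
    rwa [h2] at h3
  · have h4 := hpre.length_le
    rw [List.length_take, List.length_append, List.length_singleton]
    exact min_eq_left (by omega)

theorem exists_length_eq {T : Set (List ℤ)} (hT : IsPerfect T) {ρ : List ℤ} (hρ : ρ ∈ T)
    {l : ℕ} (hl : ρ.length ≤ l) : ∃ τ ∈ T, ρ <+: τ ∧ τ.length = l := by
  obtain ⟨k, rfl⟩ := Nat.exists_eq_add_of_le hl
  clear hl
  induction k with
  | zero => exact ⟨ρ, hρ, List.prefix_refl _, rfl⟩
  | succ k ih =>
    obtain ⟨τ, hτT, hpre, hlen⟩ := ih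
    obtain ⟨τ', hτ'T, hpre', hlen'⟩ := exists_length_succ hT hτT
    exact ⟨τ', hτ'T, hpre.trans hpre', by omega⟩

theorem exists_split_ge {T : Set (List ℤ)} (hT : IsPerfect T) {ρ : List ℤ} (hρ : ρ ∈ T)
    (B : ℕ) : ∃ τ ∈ T, ρ <+: τ ∧ Splits T τ ∧ B ≤ τ.length := by
  obtain ⟨u, huT, hupre, hulen⟩ := exists_length_eq hT hρ (le_max_left ρ.length B)
  obtain ⟨τ, hτT, hpre, hsp⟩ := hT.2.2 u huT
  refine ⟨τ, hτT, hupre.trans hpre, hsp, ?_⟩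
  have := hpre.length_le; omega


theorem iterSum_repr {F B : Set (ℕ → ℤ)} : ∀ {n : ℕ} {x : ℕ → ℤ}, x ∈ iterSum F B n →
    ∃ f ∈ F, ∃ z : Fin n → (ℕ → ℤ), (∀ i, z i ∈ B) ∧ x = f + ∑ i, z i := by
  intro n
  induction n with
  | zero =>
    intro x hx
    exact ⟨x, hx, fun i => i.elim0, fun i => i.elim0, by simp⟩
  | succ n ih =>
    intro x hx
    have hx' : x ∈ iterSum F B n + B := hx
    obtain ⟨y, hy, b, hb, hyb⟩ := Set.mem_add.1 hx'
    obtain ⟨f, hf, z, hz, rfl⟩ := ih hy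
    refine ⟨f, hf, Fin.snoc z b, ?_, ?_⟩
    · intro i
      refine Fin.lastCases ?_ ?_ i
      · simpa using hb
      · intro i; simpa using hz i
    · rw [← hyb, Fin.sum_univ_castSucc]
      simp only [Fin.snoc_castSucc, Fin.snoc_last]
      rw [add_assoc]



/-- State at stage m: (common length, level function). -/
abbrev St := ℕ × ((ℕ → Bool) → List ℤ)

variable (T : Set (List ℤ)) (Good : List ℤ → Prop) (E : Prop) (a : ℕ → ℕ)

def Inv (m : ℕ) (p : St) : Prop :=
  ∀ t, (p.2 t).length = p.1 ∧ p.2 t ∈ T ∧ Good (p.2 t) ∧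
    ∀ t', (∀ k, k < m → t k = t' k) → p.2 t = p.2 t'

def Rel (m : ℕ) (p q : St) : Prop :=
  (∀ t, p.2 t <+: q.2 t) ∧ p.1 < q.1 ∧
  (∃ c, p.1 ≤ a c ∧ a (c + 2^((m+1)*(m+1))) < q.1) ∧
  ∀ t t' : ℕ → Bool, (∀ k, k < m → t k = t' k) → t m ≠ t' m →
    ∃ d, p.1 ≤ d ∧ (q.2 t).take d = (q.2 t').take d ∧
      (q.2 t).getD d 0 ≠ (q.2 t').getD d 0 ∧ (E → d = p.1)

theorem core (hTree : IsTree T)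
    (σ₀ : List ℤ) (hσ₀T : σ₀ ∈ T) (hσ₀G : Good σ₀)
    (F : Set (ℕ → ℤ)) (xA : ℕ → ℤ) (ha0 : a 0 = 0) (haM : StrictMono a)
    (hF : F ⊆ {x | ∀ᶠ n in Filter.atTop, ∃ k, a n ≤ k ∧ k < a (n + 1) ∧ x k ≠ xA k})
    (hstep : ∀ Fs : Finset (List ℤ), (∀ σ ∈ Fs, σ ∈ T ∧ Good σ) → ∀ B : ℕ,
      ∃ l, B ≤ l ∧ ∀ σ ∈ Fs, ∃ g : Bool → List ℤ, ∃ d : ℕ,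
        (∀ b, g b ∈ T ∧ Good (g b) ∧ σ <+: g b ∧ (g b).length = l) ∧
        σ.length ≤ d ∧ (g false).take d = (g true).take d ∧
        (g false).getD d 0 ≠ (g true).getD d 0 ∧ (E → d = σ.length)) :
    ∃ T' : Set (List ℤ), T' ⊆ T ∧ IsPerfect T' ∧
      (E → IsUniformlyPerfect T') ∧ ∀ n : ℕ, MemMminus (iterSum F (branches T') n) := by
  classical
  open Stmt3Aux in
  -- Step existence
  have hstepEx : ∀ m p, Inv T Good m p → ∃ q, Inv T Good (m+1) q ∧ Rel E a m p q := by
    intro m p hp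
    haveI : DecidableEq (List ℤ) := Classical.decEq _
    set trunc : (Fin m → Bool) → (ℕ → Bool) := fun s k => if h : k < m then s ⟨k, h⟩ else false with htrunc
    set Fs : Finset (List ℤ) := Finset.image (fun s => p.2 (trunc s)) Finset.univ with hFsdef
    have hFs : ∀ σ ∈ Fs, σ ∈ T ∧ Good σ := by
      intro σ hσ
      obtain ⟨s, _, rfl⟩ := Finset.mem_image.1 hσ
      exact ⟨(hp _).2.1, (hp _).2.2.1⟩
    have hmem : ∀ t, p.2 t ∈ Fs := by
      intro t
      have h1 : p.2 t = p.2 (trunc (fun i : Fin m => t i)) := by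
        refine (hp t).2.2.2 _ ?_
        intro k hk; simp [htrunc, hk]
      rw [h1, hFsdef]
      exact Finset.mem_image_of_mem (fun s => p.2 (trunc s)) (Finset.mem_univ (fun i : Fin m => t i))
    have hcex : ∃ c, p.1 ≤ a c := ⟨p.1, haM.le_apply⟩
    set c := Nat.find hcex with hcdef
    set B := max (p.1 + 1) (a (c + 2^((m+1)*(m+1))) + 1) with hBdef
    obtain ⟨l, hBl, hσ⟩ := hstep Fs hFs B
    choose! g d hg hled htake hgd hdE using hσ
    refine ⟨(l, fun t => g (p.2 t) (t m)), ?_, ?_, ?_, ?_, ?_⟩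
    · -- Inv (m+1)
      intro t
      obtain ⟨hgT, hgG, hgpre, hglen⟩ := hg (p.2 t) (hmem t) (t m)
      refine ⟨hglen, hgT, hgG, ?_⟩
      intro t' hagree
      have h1 : p.2 t = p.2 t' := (hp t).2.2.2 t' (fun k hk => hagree k (by omega))
      have h2 : t m = t' m := hagree m (by omega)
      show g (p.2 t) (t m) = g (p.2 t') (t' m)
      rw [h1, h2]
    · intro t
      exact (hg (p.2 t) (hmem t) (t m)).2.2.1
    · calc p.1 < p.1 + 1 := Nat.lt_succ_self _
        _ ≤ B := le_max_left _ _
        _ ≤ l := hBl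
    · refine ⟨c, Nat.find_spec hcex, ?_⟩
      calc a (c + 2^((m+1)*(m+1))) < a (c + 2^((m+1)*(m+1))) + 1 := Nat.lt_succ_self _
        _ ≤ B := le_max_right _ _
        _ ≤ l := hBl
    · intro t t' hagree hne
      have h1 : p.2 t = p.2 t' := (hp t).2.2.2 t' hagree
      have hlenp : (p.2 t).length = p.1 := (hp t).1
      have hmemt := hmem t
      have key : ∀ b b' : Bool, b ≠ b' →
          ∃ d', p.1 ≤ d' ∧ (g (p.2 t) b).take d' = (g (p.2 t) b').take d' ∧
            (g (p.2 t) b).getD d' 0 ≠ (g (p.2 t) b').getD d' 0 ∧ (E → d' = p.1) := by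
        intro b b' hbb'
        cases b <;> cases b'
        · exact absurd rfl hbb'
        · exact ⟨d (p.2 t), hlenp ▸ hled _ hmemt, htake _ hmemt, hgd _ hmemt,
            fun hE => by rw [hdE _ hmemt hE, hlenp]⟩
        · exact ⟨d (p.2 t), hlenp ▸ hled _ hmemt, (htake _ hmemt).symm, (hgd _ hmemt).symm,
            fun hE => by rw [hdE _ hmemt hE, hlenp]⟩
        · exact absurd rfl hbb'
      show ∃ d', p.1 ≤ d' ∧ (g (p.2 t) (t m)).take d' = (g (p.2 t') (t' m)).take d' ∧
        (g (p.2 t) (t m)).getD d' 0 ≠ (g (p.2 t') (t' m)).getD d' 0 ∧ (E → d' = p.1)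
      rw [← h1]
      exact key _ _ hne
  -- the sequence of stages
  set step : ℕ → St → St := fun m p =>
    if h : Inv T Good m p then Classical.choose (hstepEx m p h) else p with hstepdef
  set lev : ℕ → St := fun m => Nat.rec (σ₀.length, fun _ => σ₀) step m with hlevdef
  have levS : ∀ m, lev (m+1) = step m (lev m) := fun m => rfl
  have hInv : ∀ m, Inv T Good m (lev m) := by
    intro m
    induction m with
    | zero => intro t; exact ⟨rfl, hσ₀T, hσ₀G, fun t' _ => rfl⟩
    | succ m ih =>
      rw [levS, hstepdef]
      simp only [dif_pos ih]
      exact (Classical.choose_spec (hstepEx m (lev m) ih)).1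
  have hRel : ∀ m, Rel E a m (lev m) (lev (m+1)) := by
    intro m
    rw [levS, hstepdef]
    simp only [dif_pos (hInv m)]
    exact (Classical.choose_spec (hstepEx m (lev m) (hInv m))).2
  set L : ℕ → ℕ := fun m => (lev m).1 with hLdef
  set η : ℕ → (ℕ → Bool) → List ℤ := fun m => (lev m).2 with hηdef
  have hlen : ∀ m t, (η m t).length = L m := fun m t => (hInv m t).1
  have hηT : ∀ m t, η m t ∈ T := fun m t => (hInv m t).2.1
  have hdep : ∀ m t t', (∀ k, k < m → t k = t' k) → η m t = η m t' :=
    fun m t t' h => (hInv m t).2.2.2 t' h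
  have hpre : ∀ m t, η m t <+: η (m+1) t := fun m t => (hRel m).1 t
  have hLlt : ∀ m, L m < L (m+1) := fun m => (hRel m).2.1
  have hLmono : StrictMono L := strictMono_nat_of_lt_succ hLlt
  have hgap : ∀ m, ∃ c, L m ≤ a c ∧ a (c + 2^((m+1)*(m+1))) < L (m+1) :=
    fun m => (hRel m).2.2.1
  have hdiv : ∀ m (t t' : ℕ → Bool), (∀ k, k < m → t k = t' k) → t m ≠ t' m →
      ∃ d, L m ≤ d ∧ (η (m+1) t).take d = (η (m+1) t').take d ∧
        (η (m+1) t).getD d 0 ≠ (η (m+1) t').getD d 0 ∧ (E → d = L m) :=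
    fun m => (hRel m).2.2.2
  have hchain : ∀ {m M : ℕ}, m ≤ M → ∀ t, η m t <+: η M t := by
    intro m M h
    induction h with
    | refl => exact fun t => List.prefix_refl _
    | step h ih => exact fun t => (ih t).trans (hpre _ t)
  have htake_eq : ∀ {m M : ℕ}, m ≤ M → ∀ t, (η M t).take (L m) = η m t := by
    intro m M h t
    have h1 := List.prefix_iff_eq_take.1 (hchain h t)
    rw [hlen] at h1
    exact h1.symm
  set T' : Set (List ℤ) := {τ | ∃ m t, τ <+: η m t} with hT'def
  have hT'T : T' ⊆ T := by rintro τ ⟨m, t, hp⟩; exact hTree _ (hηT m t) τ hp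
  have hT'tree : IsTree T' := by rintro σ ⟨m, t, hp⟩ τ hτ; exact ⟨m, t, hτ.trans hp⟩
  have hT'ne : T'.Nonempty := ⟨η 0 (fun _ => false), 0, fun _ => false, List.prefix_refl _⟩
  have hnode : ∀ τ ∈ T', ∀ m, τ.length ≤ L m → ∃ t, τ <+: η m t := by
    rintro τ ⟨M, t, hp⟩ m hlenle
    rcases le_total M m with h | h
    · exact ⟨t, hp.trans (hchain h t)⟩
    · refine ⟨t, ?_⟩
      have h1 : τ = (η M t).take τ.length := List.prefix_iff_eq_take.1 hp
      rw [h1, ← htake_eq h t]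
      exact List.take_prefix_take_left hlenle
  have hnodeEq : ∀ τ ∈ T', ∀ m, τ.length = L m → ∃ t, τ = η m t := by
    intro τ hτ m hl
    obtain ⟨t, hp⟩ := hnode τ hτ m hl.le
    exact ⟨t, Stmt3Aux.eq_of_prefix_length hp (by rw [hl, hlen])⟩
  have hflip : ∀ (t : ℕ → Bool) m, ∃ t' : ℕ → Bool, (∀ k, k < m → t k = t' k) ∧ t m ≠ t' m := by
    intro t m
    refine ⟨fun k => if k = m then !(t m) else t k, fun k hk => ?_, ?_⟩
    · simp [Nat.ne_of_lt hk]
    · simp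
  have hsplitnode : ∀ m t, ∃ d, L m ≤ d ∧ (E → d = L m) ∧ d < L (m+1) ∧
      (η (m+1) t).take d ∈ T' ∧ Splits T' ((η (m+1) t).take d) := by
    intro m t
    obtain ⟨t', hag, hne⟩ := hflip t m
    obtain ⟨d, hdL, htk, hgd, hdE⟩ := hdiv m t t' hag hne
    have hdlt : d < L (m+1) := by
      by_contra hcon
      push_neg at hcon
      apply hgd
      rw [List.getD_eq_default _ _ ((hlen (m+1) t).le.trans hcon),
        List.getD_eq_default _ _ ((hlen (m+1) t').le.trans hcon)]
    refine ⟨d, hdL, hdE, hdlt, ⟨m+1, t, List.take_prefix _ _⟩, ?_⟩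
    refine ⟨(η (m+1) t).getD d 0, (η (m+1) t').getD d 0, hgd, ?_, ?_⟩
    · exact ⟨m+1, t, Stmt3Aux.take_getD_prefix _ (lt_of_lt_of_le hdlt (hlen (m+1) t).ge)⟩
    · rw [htk]
      exact ⟨m+1, t', Stmt3Aux.take_getD_prefix _ (lt_of_lt_of_le hdlt (hlen (m+1) t').ge)⟩
  have hT'perf : IsPerfect T' := by
    refine ⟨hT'tree, hT'ne, ?_⟩
    rintro σ ⟨M, t, hp⟩
    obtain ⟨d, hdL, _, hdlt, hmem2, hsp⟩ := hsplitnode M t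
    refine ⟨(η (M+1) t).take d, hmem2, ?_, hsp⟩
    refine hp.trans ?_
    rw [← htake_eq (Nat.le_succ M) t]
    exact List.take_prefix_take_left hdL
  have hUnif : E → IsUniformlyPerfect T' := by
    intro hE
    refine ⟨hT'perf, ?_⟩
    intro n
    by_cases hn : ∃ m, n = L m
    · left
      intro σ hσ hσlen
      obtain ⟨m, hm⟩ := hn
      obtain ⟨t, rfl⟩ := hnodeEq σ hσ m (hσlen.trans hm)
      obtain ⟨d, hdL, hdE, hdlt, hmem2, hsp⟩ := hsplitnode m t
      have hd : d = L m := hdE hE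
      rw [← htake_eq (Nat.le_succ m) t, ← hd]
      exact hsp
    · right
      rintro σ hσ rfl ⟨i, j, hij, hiT, hjT⟩
      obtain ⟨M1, t, hp1⟩ := hiT
      obtain ⟨M2, t'', hp2⟩ := hjT
      set M := max M1 M2 with hMdef
      have hp1' : σ ++ [i] <+: η M t := hp1.trans (hchain (le_max_left _ _) t)
      have hp2' : σ ++ [j] <+: η M t'' := hp2.trans (hchain (le_max_right _ _) t'')
      obtain ⟨htk1, hgd1⟩ := Stmt3Aux.prefix_singleton_parts hp1'
      obtain ⟨htk2, hgd2⟩ := Stmt3Aux.prefix_singleton_parts hp2'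
      have hex : ∃ k, t k ≠ t'' k := by
        by_contra hcon
        push_neg at hcon
        have heq : η M t = η M t'' := hdep M t t'' (fun k _ => hcon k)
        rw [heq, hgd2] at hgd1
        exact hij hgd1.symm
      have hrspec : t (Nat.find hex) ≠ t'' (Nat.find hex) := Nat.find_spec hex
      set r := Nat.find hex with hrdef
      have hagr : ∀ k, k < r → t k = t'' k := by
        intro k hk
        by_contra hcon
        exact Nat.find_min hex hk hcon
      have hrM : r < M := by
        by_contra hcon
        push_neg at hcon
        have heq : η M t = η M t'' := hdep M t t'' (fun k hk => hagr k (lt_of_lt_of_le hk hcon))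
        rw [heq, hgd2] at hgd1
        exact hij hgd1.symm
      obtain ⟨d, hdL, htkd, hgdd, hdE⟩ := hdiv r t t'' hagr hrspec
      have hd : d = L r := hdE hE
      subst hd
      have hq1 : η (r+1) t <+: η M t := hchain (Nat.succ_le_of_lt hrM) t
      have hq2 : η (r+1) t'' <+: η M t'' := hchain (Nat.succ_le_of_lt hrM) t''
      apply hn
      refine ⟨r, ?_⟩
      rcases lt_trichotomy σ.length (L r) with hlt | heq | hgt
      · exfalso
        apply hij
        have e1 : (η M t).take (L r) = (η M t'').take (L r) := by
          rw [Stmt3Aux.take_of_prefix hq1 (by rw [hlen (r+1) t]; exact (hLlt r).le),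
            Stmt3Aux.take_of_prefix hq2 (by rw [hlen (r+1) t'']; exact (hLlt r).le), htkd]
        calc i = (η M t).getD σ.length 0 := hgd1.symm
          _ = ((η M t).take (L r)).getD σ.length 0 := (Stmt3Aux.getD_take _ hlt).symm
          _ = ((η M t'').take (L r)).getD σ.length 0 := by rw [e1]
          _ = (η M t'').getD σ.length 0 := Stmt3Aux.getD_take _ hlt
          _ = j := hgd2
      · exact heq
      · exfalso
        apply hgdd
        have hLrlt1 : L r < (η (r+1) t).length := by rw [hlen (r+1) t]; exact hLlt r
        have hLrlt2 : L r < (η (r+1) t'').length := by rw [hlen (r+1) t'']; exact hLlt r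
        calc (η (r+1) t).getD (L r) 0
            = (η M t).getD (L r) 0 := Stmt3Aux.getD_of_prefix hq1 hLrlt1
          _ = ((η M t).take σ.length).getD (L r) 0 := (Stmt3Aux.getD_take _ hgt).symm
          _ = ((η M t'').take σ.length).getD (L r) 0 := by rw [htk1, htk2]
          _ = (η M t'').getD (L r) 0 := Stmt3Aux.getD_take _ hgt
          _ = (η (r+1) t'').getD (L r) 0 := (Stmt3Aux.getD_of_prefix hq2 hLrlt2).symm
  refine ⟨T', hT'T, hT'perf, hUnif, ?_⟩
  intro n
  choose c hc1 hc2 using hgap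
  have hcstrict : StrictMono c := by
    apply strictMono_nat_of_lt_succ
    intro m
    have h1 : a (c m) < a (c (m+1)) :=
      lt_of_le_of_lt (haM.monotone (Nat.le_add_right _ _)) (lt_of_lt_of_le (hc2 m) (hc1 (m+1)))
    exact haM.lt_iff_lt.1 h1
  have hcsucc : ∀ m, c m + 2^((m+1)*(m+1)) < c (m+1) := by
    intro m
    have h1 : a (c m + 2^((m+1)*(m+1))) < a (c (m+1)) := lt_of_lt_of_le (hc2 m) (hc1 (m+1))
    exact haM.lt_iff_lt.1 h1
  have hcge : ∀ m, m ≤ c m := fun m => hcstrict.le_apply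
  have hcard : ∀ m : ℕ, Fintype.card (Fin n → Fin (m+1) → Bool) = 2^((m+1)*n) := by
    intro m
    simp only [Fintype.card_fun, Fintype.card_bool, Fintype.card_fin]
    rw [← pow_mul]
  set ce : ∀ m : ℕ, (Fin n → Fin (m+1) → Bool) → ℕ :=
    fun m uu => ((Fintype.equivFin (Fin n → Fin (m+1) → Bool)) uu : ℕ) with hcedef
  have ce_inj : ∀ m uu uu', ce m uu = ce m uu' → uu = uu' := by
    intro m uu uu' h
    exact (Fintype.equivFin _).injective (Fin.val_injective h)
  have ce_lt : ∀ m, n ≤ m+1 → ∀ uu, ce m uu < 2^((m+1)*(m+1)) := by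
    intro m hm uu
    have h1 : ce m uu < Fintype.card (Fin n → Fin (m+1) → Bool) :=
      ((Fintype.equivFin _) uu).isLt
    rw [hcard m] at h1
    exact lt_of_lt_of_le h1 (Nat.pow_le_pow_right (by norm_num) (Nat.mul_le_mul_left _ hm))
  set embed : ∀ m : ℕ, (Fin (m+1) → Bool) → (ℕ → Bool) :=
    fun m s k => if h : k < m+1 then s ⟨k, h⟩ else false with hembdef
  set pat : ∀ m : ℕ, (Fin n → Fin (m+1) → Bool) → ℕ → ℤ :=
    fun m uu k => ∑ i : Fin n, (η (m+1) (embed m (uu i))).getD k 0 with hpatdef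
  set idx : ∀ m : ℕ, (Fin n → Fin (m+1) → Bool) → ℕ := fun m uu => c m + ce m uu with hidxdef
  have hidx_lt : ∀ m uu, n ≤ m+1 → idx m uu + 1 ≤ c m + 2^((m+1)*(m+1)) := by
    intro m uu hm
    have := ce_lt m hm uu
    simp only [hidxdef]
    omega
  have huniq : ∀ (m m' : ℕ) (uu : Fin n → Fin (m+1) → Bool) (uu' : Fin n → Fin (m'+1) → Bool)
      (k : ℕ), n ≤ m+1 → n ≤ m'+1 → a (idx m uu) ≤ k → k < a (idx m uu + 1) →
      a (idx m' uu') ≤ k → k < a (idx m' uu' + 1) → pat m uu k = pat m' uu' k := by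
    intro m m' uu uu' k hm hm' h1 h2 h3 h4
    have hj : idx m uu = idx m' uu' := by
      by_contra hne2
      rcases Nat.lt_or_ge (idx m uu) (idx m' uu') with h | h
      · have hmono := haM.monotone (Nat.succ_le_of_lt h)
        simp only [Nat.succ_eq_add_one] at hmono
        omega
      · have h' : idx m' uu' < idx m uu := by omega
        have hmono := haM.monotone (Nat.succ_le_of_lt h')
        simp only [Nat.succ_eq_add_one] at hmono
        omega
    have hmm : m = m' := by
      by_contra hne2
      rcases Nat.lt_or_ge m m' with h | h
      · have hA : idx m uu + 1 ≤ c m + 2^((m+1)*(m+1)) := hidx_lt m uu hm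
        have hB : c m + 2^((m+1)*(m+1)) < c (m+1) := hcsucc m
        have hC : c (m+1) ≤ c m' := hcstrict.monotone (Nat.succ_le_of_lt h)
        have hD : c m' ≤ idx m' uu' := Nat.le_add_right _ _
        omega
      · have h' : m' < m := by omega
        have hA : idx m' uu' + 1 ≤ c m' + 2^((m'+1)*(m'+1)) := hidx_lt m' uu' hm'
        have hB : c m' + 2^((m'+1)*(m'+1)) < c (m'+1) := hcsucc m'
        have hC : c (m'+1) ≤ c m := hcstrict.monotone (Nat.succ_le_of_lt h')
        have hD : c m ≤ idx m uu := Nat.le_add_right _ _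
        omega
    subst hmm
    have huuuu : uu = uu' := ce_inj m uu uu' (by simp only [hidxdef] at hj; omega)
    rw [huuuu]
  set xA' : ℕ → ℤ := fun k =>
    if h : ∃ m : ℕ, ∃ uu : Fin n → Fin (m+1) → Bool,
        n ≤ m+1 ∧ a (idx m uu) ≤ k ∧ k < a (idx m uu + 1)
      then xA k + pat h.choose h.choose_spec.choose k
      else 0 with hxA'def
  have hxA'spec : ∀ (m : ℕ) (uu : Fin n → Fin (m+1) → Bool) (k : ℕ),
      n ≤ m+1 → a (idx m uu) ≤ k → k < a (idx m uu + 1) → xA' k = xA k + pat m uu k := by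
    intro m uu k hm h1 h2
    have hex : ∃ m : ℕ, ∃ uu : Fin n → Fin (m+1) → Bool,
        n ≤ m+1 ∧ a (idx m uu) ≤ k ∧ k < a (idx m uu + 1) := ⟨m, uu, hm, h1, h2⟩
    simp only [hxA'def, dif_pos hex]
    obtain ⟨g1, g2, g3⟩ := hex.choose_spec.choose_spec
    rw [huniq _ _ _ _ k g1 hm g2 g3 h1 h2]
  set a' : ℕ → ℕ := fun m => if m = 0 then 0 else L m with ha'def
  have ha'0 : a' 0 = 0 := by simp [ha'def]
  have ha'mono : StrictMono a' := by
    apply strictMono_nat_of_lt_succ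
    intro m
    cases m with
    | zero =>
      simp only [ha'def, if_pos rfl, if_neg (Nat.one_ne_zero)]
      exact Nat.lt_of_le_of_lt (Nat.zero_le (L 0)) (hLlt 0)
    | succ m =>
      simp only [ha'def, if_neg (Nat.succ_ne_zero _)]
      exact hLlt (m+1)
  refine ⟨xA', a', ha'0, ha'mono, ?_⟩
  intro x hx
  obtain ⟨f, hfF, z, hz, rfl⟩ := Stmt3Aux.iterSum_repr hx
  have hfe := hF hfF
  rw [Set.mem_setOf_eq, Filter.eventually_atTop] at hfe
  obtain ⟨j₀, hj₀⟩ := hfe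
  simp only [Set.mem_setOf_eq]
  rw [Filter.eventually_atTop]
  refine ⟨max 1 (max n j₀), ?_⟩
  intro m hm
  have hm1 : 1 ≤ m := le_trans (le_max_left _ _) hm
  have hmn : n ≤ m := le_trans (le_trans (le_max_left _ _) (le_max_right _ _)) hm
  have hmj : j₀ ≤ m := le_trans (le_trans (le_max_right _ _) (le_max_right _ _)) hm
  have hcode : ∀ i : Fin n, ∃ t : ℕ → Bool, res (z i) (L (m+1)) = η (m+1) t := by
    intro i
    have h1 : res (z i) (L (m+1)) ∈ T' := hz i (L (m+1))
    obtain ⟨t, hp⟩ := hnode _ h1 (m+1) (by rw [Stmt3Aux.res_length])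
    exact ⟨t, Stmt3Aux.eq_of_prefix_length hp
      (by rw [Stmt3Aux.res_length, hlen (m+1) t])⟩
  choose t ht using hcode
  set uu : Fin n → Fin (m+1) → Bool := fun i q => t i q with huudef
  have hηuu : ∀ i, η (m+1) (embed m (uu i)) = η (m+1) (t i) := by
    intro i
    refine hdep (m+1) _ _ ?_
    intro k hk
    simp [hembdef, huudef, hk]
    intro _; omega
  set j := idx m uu with hjdef
  have hj₀j : j₀ ≤ j := by
    have := hcge m
    simp only [hjdef, hidxdef]
    omega
  obtain ⟨k, hk1, hk2, hk3⟩ := hj₀ j hj₀j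
  have hcmj : c m ≤ j := Nat.le_add_right _ _
  have hkLow : L m ≤ k := le_trans (hc1 m) (le_trans (haM.monotone hcmj) hk1)
  have hkHigh : k < L (m+1) := by
    have h1 : j + 1 ≤ c m + 2^((m+1)*(m+1)) := hidx_lt m uu (by omega)
    exact lt_of_lt_of_le hk2 (le_trans (haM.monotone h1) (hc2 m).le)
  refine ⟨k, ?_, ?_, ?_⟩
  · show a' m ≤ k
    simp only [ha'def]
    rw [if_neg (by omega)]
    exact hkLow
  · show k < a' (m+1)
    simp only [ha'def]
    rw [if_neg (by omega)]
    exact hkHigh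
  · have hxk : (f + ∑ i, z i) k = f k + ∑ i : Fin n, z i k := by
      simp [Finset.sum_apply]
    have hzk : ∀ i : Fin n, z i k = (η (m+1) (t i)).getD k 0 := by
      intro i
      rw [← ht i, Stmt3Aux.res_getD _ hkHigh]
    have hxA'k : xA' k = xA k + ∑ i : Fin n, (η (m+1) (t i)).getD k 0 := by
      rw [hxA'spec m uu k (by omega) hk1 hk2]
      simp only [hpatdef]
      congr 1
      exact Finset.sum_congr rfl (fun i _ => by rw [hηuu i])
    rw [hxk, hxA'k]
    intro hcon
    apply hk3
    have hsum : ∑ i : Fin n, z i k = ∑ i : Fin n, (η (m+1) (t i)).getD k 0 :=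
      Finset.sum_congr rfl (fun i _ => hzk i)
    rw [hsum] at hcon
    exact add_right_cancel hcon

theorem main_perfect (T : Set (List ℤ)) (hP : IsPerfect T)
    (F : Set (ℕ → ℤ)) (hFM : MemMminus F) :
    ∃ T' : Set (List ℤ), T' ⊆ T ∧ IsPerfect T' ∧
      ∀ n : ℕ, MemMminus (iterSum F (branches T') n) := by
  classical
  obtain ⟨xA, a, ha0, haM, hF⟩ := hFM
  obtain ⟨σ₀, hσ₀⟩ := hP.2.1
  have hcore := core T (fun _ => True) False a hP.1 σ₀ hσ₀ trivial F xA ha0 haM hF (by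
    intro Fs hFs B
    have hsp : ∀ σ, σ ∈ Fs → ∃ τ, τ ∈ T ∧ σ <+: τ ∧ Splits T τ := by
      intro σ hσ
      obtain ⟨τ, hτT, hpre, hs⟩ := hP.2.2 σ (hFs σ hσ).1
      exact ⟨τ, hτT, hpre, hs⟩
    choose! sp hspT hsppre hspsp using hsp
    refine ⟨max B ((Fs.sup fun σ => (sp σ).length) + 1), le_max_left _ _, ?_⟩
    intro σ hσ
    obtain ⟨i, j, hij, hi, hj⟩ := hspsp σ hσ
    have hbound : (sp σ).length + 1 ≤ max B ((Fs.sup fun σ => (sp σ).length) + 1) := by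
      have h1 : (sp σ).length ≤ Fs.sup fun σ => (sp σ).length := Finset.le_sup (f := fun σ => (sp σ).length) hσ
      have h2 : (Fs.sup fun σ => (sp σ).length) + 1 ≤
        max B ((Fs.sup fun σ => (sp σ).length) + 1) := le_max_right _ _
      omega
    obtain ⟨u, huT, hupre, hulen⟩ := Stmt3Aux.exists_length_eq hP hi
      (l := max B ((Fs.sup fun σ => (sp σ).length) + 1))
      (by rw [List.length_append, List.length_singleton]; exact hbound)
    obtain ⟨v, hvT, hvpre, hvlen⟩ := Stmt3Aux.exists_length_eq hP hj
      (l := max B ((Fs.sup fun σ => (sp σ).length) + 1))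
      (by rw [List.length_append, List.length_singleton]; exact hbound)
    refine ⟨fun b => if b then v else u, (sp σ).length, ?_, ?_, ?_, ?_, ?_⟩
    · intro b
      cases b
      · exact ⟨huT, trivial, (hsppre σ hσ).trans ((List.prefix_append _ _).trans hupre), hulen⟩
      · exact ⟨hvT, trivial, (hsppre σ hσ).trans ((List.prefix_append _ _).trans hvpre), hvlen⟩
    · exact (hsppre σ hσ).length_le
    · show u.take (sp σ).length = v.take (sp σ).length
      rw [(Stmt3Aux.prefix_singleton_parts hupre).1, (Stmt3Aux.prefix_singleton_parts hvpre).1]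
    · show u.getD (sp σ).length 0 ≠ v.getD (sp σ).length 0
      rw [(Stmt3Aux.prefix_singleton_parts hupre).2, (Stmt3Aux.prefix_singleton_parts hvpre).2]
      exact hij
    · exact fun hE => hE.elim)
  obtain ⟨T', h1, h2, _, h4⟩ := hcore
  exact ⟨T', h1, h2, h4⟩

theorem main_unif (T : Set (List ℤ)) (hU : IsUniformlyPerfect T)
    (F : Set (ℕ → ℤ)) (hFM : MemMminus F) :
    ∃ T' : Set (List ℤ), T' ⊆ T ∧ IsUniformlyPerfect T' ∧
      ∀ n : ℕ, MemMminus (iterSum F (branches T') n) := by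
  classical
  obtain ⟨hP, hlev⟩ := hU
  obtain ⟨xA, a, ha0, haM, hF⟩ := hFM
  have hnil : [] ∈ T := by
    obtain ⟨σ, hσ⟩ := hP.2.1
    exact hP.1 σ hσ [] List.nil_prefix
  obtain ⟨σ₀, hσ₀T, _, hσ₀sp, _⟩ := Stmt3Aux.exists_split_ge hP hnil 0
  have hcore := core T (fun σ => Splits T σ) True a hP.1 σ₀ hσ₀T hσ₀sp F xA ha0 haM hF (by
    intro Fs hFs B
    obtain ⟨τ, hτT, _, hτsp, hτlen⟩ :=
      Stmt3Aux.exists_split_ge hP hnil (max B ((Fs.sup fun σ => σ.length) + 1))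
    refine ⟨τ.length, le_trans (le_max_left _ _) hτlen, ?_⟩
    have hall : ∀ ρ ∈ T, ρ.length = τ.length → Splits T ρ := by
      rcases hlev τ.length with h | h
      · exact h
      · exact absurd hτsp (h τ hτT rfl)
    intro σ hσ
    obtain ⟨i, j, hij, hi, hj⟩ := (hFs σ hσ).2
    have hbound : σ.length + 1 ≤ τ.length := by
      have h1 : σ.length ≤ Fs.sup fun σ => σ.length := Finset.le_sup (f := fun σ => σ.length) hσ
      have h2 : (Fs.sup fun σ => σ.length) + 1 ≤
        max B ((Fs.sup fun σ => σ.length) + 1) := le_max_right _ _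
      omega
    obtain ⟨u, huT, hupre, hulen⟩ := Stmt3Aux.exists_length_eq hP hi (l := τ.length)
      (by rw [List.length_append, List.length_singleton]; exact hbound)
    obtain ⟨v, hvT, hvpre, hvlen⟩ := Stmt3Aux.exists_length_eq hP hj (l := τ.length)
      (by rw [List.length_append, List.length_singleton]; exact hbound)
    refine ⟨fun b => if b then v else u, σ.length, ?_, le_rfl, ?_, ?_, ?_⟩
    · intro b
      cases b
      · exact ⟨huT, hall u huT hulen, (List.prefix_append _ _).trans hupre, hulen⟩
      · exact ⟨hvT, hall v hvT hvlen, (List.prefix_append _ _).trans hvpre, hvlen⟩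
    · show u.take σ.length = v.take σ.length
      rw [(Stmt3Aux.prefix_singleton_parts hupre).1, (Stmt3Aux.prefix_singleton_parts hvpre).1]
    · show u.getD σ.length 0 ≠ v.getD σ.length 0
      rw [(Stmt3Aux.prefix_singleton_parts hupre).2, (Stmt3Aux.prefix_singleton_parts hvpre).2]
      exact hij
    · exact fun _ => rfl)
  obtain ⟨T', h1, h2, h3, h4⟩ := hcore
  exact ⟨T', h1, h3 trivial, h4⟩

theorem stmt3' :
    (∀ F : Set (ℕ → ℤ), ∀ T : Set (List ℤ), MemMminus F → IsPerfect T →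
      ∃ T' : Set (List ℤ), T' ⊆ T ∧ IsPerfect T' ∧
        ∀ n : ℕ, 1 ≤ n → MemMminus (iterSum F (branches T') n)) ∧
    (∀ F : Set (ℕ → ℤ), ∀ T : Set (List ℤ), MemMminus F → IsUniformlyPerfect T →
      ∃ T' : Set (List ℤ), T' ⊆ T ∧ IsUniformlyPerfect T' ∧
        ∀ n : ℕ, 1 ≤ n → MemMminus (iterSum F (branches T') n)) := by
  constructor
  · intro F T hFM hT
    obtain ⟨T', h1, h2, h4⟩ := main_perfect T hT F hFM
    exact ⟨T', h1, h2, fun n _ => h4 n⟩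
  · intro F T hFM hT
    obtain ⟨T', h1, h2, h4⟩ := main_unif T hT F hFM
    exact ⟨T', h1, h2, fun n _ => h4 n⟩

end Stmt3Aux


/-- For `F ∈ M₋` and a (uniformly) perfect tree `T` there is a
(uniformly) perfect `T' ⊆ T` with all `n`-fold sums `F + [T'] + ⋯ + [T']` in `M₋`. -/
theorem stmt3 :
    (∀ F : Set (ℕ → ℤ), ∀ T : Set (List ℤ), MemMminus F → IsPerfect T →
      ∃ T' : Set (List ℤ), T' ⊆ T ∧ IsPerfect T' ∧
        ∀ n : ℕ, 1 ≤ n → MemMminus (iterSum F (branches T') n)) ∧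
    (∀ F : Set (ℕ → ℤ), ∀ T : Set (List ℤ), MemMminus F → IsUniformlyPerfect T →
      ∃ T' : Set (List ℤ), T' ⊆ T ∧ IsUniformlyPerfect T' ∧
        ∀ n : ℕ, 1 ≤ n → MemMminus (iterSum F (branches T') n)) :=
  Stmt3Aux.stmt3'
end

section
/- For every set F ∈ M₋ and every ω-Silver tree T ⊆ ℤ^{<ω} there exists an ω-Silver tree T' ⊆ T such that for every n ≥ 1 the n-fold sum F + [T'] + [T'] + ⋯ + [T'] belongs to M₋. -/
open Pointwise Filter

/-- Auxiliary sparse sequence of elements of `A`. -/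
noncomputable def cseq (A : Set ℕ) (a : ℕ → ℕ) : ℕ → ℕ
  | 0 => Nat.nth A 0
  | m + 1 => Nat.nth A (a (cseq A a m + 2))

/-- Auxiliary coarser interval endpoints. -/
def bseq (a c : ℕ → ℕ) : ℕ → ℕ
  | 0 => 0
  | m + 1 => a (c m + 2)

lemma branch_eq_off (A' : Set ℕ) (xT : ℕ → ℤ) {z : ℕ → ℤ}
    (hz : z ∈ branches (silverTree A' xT)) {k : ℕ} (hk : k ∉ A') : z k = xT k := by
  have h := hz (k + 1)
  have hlen : k < (res z (k + 1)).length := by simp [res]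
  have h2 := h k hlen hk
  unfold res at h2
  rw [List.get_ofFn] at h2
  simpa using h2

/-- For `F ∈ M₋` and an ω-Silver tree `T` there is an ω-Silver
`T' ⊆ T` with all `n`-fold sums `F + [T'] + ⋯ + [T']` in `M₋`. -/
theorem stmt4 (F : Set (ℕ → ℤ)) (T : Set (List ℤ))
    (hF : MemMminus F) (hT : IsOmegaSilver T) :
    ∃ T' : Set (List ℤ), T' ⊆ T ∧ IsOmegaSilver T' ∧
      ∀ n : ℕ, 1 ≤ n → MemMminus (iterSum F (branches T') n) := by
  obtain ⟨xA, a, ha0, haM, hFsub⟩ := hF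
  obtain ⟨A, hAinf, xT, rfl⟩ := hT
  set c : ℕ → ℕ := cseq A a with hcdef
  have hnth : ∀ t, t ≤ Nat.nth A t := fun t => (Nat.nth_strictMono hAinf).le_apply
  have hale : ∀ t, t ≤ a t := fun t => haM.le_apply
  have hcA : ∀ m, c m ∈ A := by
    intro m
    cases m with
    | zero => exact Nat.nth_mem_of_infinite hAinf 0
    | succ m => exact Nat.nth_mem_of_infinite hAinf _
  have hc1 : ∀ m, a (c m + 2) ≤ c (m + 1) := fun m => hnth _
  have hclt : ∀ m, c m < a (c m + 2) := fun m => lt_of_lt_of_le (by omega) (hale _)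
  have hcmono : StrictMono c :=
    strictMono_nat_of_lt_succ fun m => lt_of_lt_of_le (hclt m) (hc1 m)
  set A' : Set ℕ := Set.range c with hA'def
  have hA'sub : A' ⊆ A := by rintro _ ⟨m, rfl⟩; exact hcA m
  refine ⟨silverTree A' xT, ?_, ⟨A', Set.infinite_range_of_injective hcmono.injective, xT, rfl⟩, ?_⟩
  · intro σ hσ n h hnA
    exact hσ n h fun hn' => hnA (hA'sub hn')
  intro n _
  -- representation of elements of the iterated sum
  have hrep : ∀ m : ℕ, ∀ x ∈ iterSum F (branches (silverTree A' xT)) m,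
      ∃ f ∈ F, ∀ k, k ∉ A' → x k = f k + (m : ℤ) * xT k := by
    intro m
    induction m with
    | zero => intro x hx; exact ⟨x, hx, fun k _ => by simp⟩
    | succ m ih =>
      intro x hx
      obtain ⟨y, hy, z, hz, rfl⟩ := hx
      obtain ⟨f, hf, hfy⟩ := ih y hy
      refine ⟨f, hf, fun k hk => ?_⟩
      have hzk := branch_eq_off A' xT hz hk
      show y k + z k = f k + ((m + 1 : ℕ) : ℤ) * xT k
      rw [hfy k hk, hzk]
      push_cast; ring
  refine ⟨fun k => xA k + (n : ℤ) * xT k, bseq a c, rfl, ?_, ?_⟩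
  · refine strictMono_nat_of_lt_succ fun m => ?_
    cases m with
    | zero =>
      show 0 < a (c 0 + 2)
      exact lt_of_lt_of_le (by omega) (hale _)
    | succ m =>
      show a (c m + 2) < a (c (m + 1) + 2)
      exact haM (by have h := hcmono (show m < m + 1 by omega); omega)
  · intro x hx
    obtain ⟨f, hf, hfx⟩ := hrep n x hx
    have hev := hFsub hf
    simp only [Set.mem_setOf_eq, Filter.eventually_atTop] at hev ⊢
    obtain ⟨N, hN⟩ := hev
    refine ⟨N + 1, fun m hm => ?_⟩
    obtain ⟨m', rfl⟩ : ∃ m', m = m' + 1 := ⟨m - 1, by omega⟩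
    have hcm : m' + 1 ≤ c (m' + 1) := hcmono.le_apply
    obtain ⟨k, hk1, hk2, hk3⟩ := hN (c (m' + 1) + 1) (by omega)
    have hk2' : k < a (c (m' + 1) + 2) := by
      rw [show c (m' + 1) + 2 = c (m' + 1) + 1 + 1 by omega]; exact hk2
    have hkA' : k ∉ A' := by
      rintro ⟨i, rfl⟩
      rcases le_or_gt i (m' + 1) with hi | hi
      · have h1 : c i ≤ c (m' + 1) := hcmono.monotone hi
        have h2 : c (m' + 1) < a (c (m' + 1) + 1) := lt_of_lt_of_le (by omega) (hale _)
        omega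
      · have h1 : c (m' + 2) ≤ c i := hcmono.monotone hi
        have h2 : a (c (m' + 1) + 2) ≤ c (m' + 2) := hc1 (m' + 1)
        omega
    refine ⟨k, ?_, ?_, ?_⟩
    · show a (c m' + 2) ≤ k
      have h1 : a (c m' + 2) ≤ a (c (m' + 1) + 1) :=
        haM.monotone (by have h := hcmono (show m' < m' + 1 by omega); omega)
      omega
    · exact hk2'
    · rw [hfx k hkA']
      intro heq
      exact hk3 (by linarith [heq])
end

section
/- For every meager set F ⊆ ℤ^ω and every perfect tree T ⊆ ℤ^{<ω} there exists a perfect tree T' ⊆ T such that F + [T'] is meager; moreover, if T is uniformly perfect then T' can be chosen uniformly perfect. -/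
open Pointwise Filter

namespace Stmt5

theorem res_length (x : ℕ → ℤ) (n : ℕ) : (res x n).length = n := by simp [res]

theorem res_getElem (x : ℕ → ℤ) {n i : ℕ} (h : i < n) :
    (res x n)[i]'(by simpa [res_length] using h) = x i := by simp [res]

theorem res_eq_iff {x y : ℕ → ℤ} {n : ℕ} :
    res x n = res y n ↔ ∀ i < n, x i = y i := by
  constructor
  · intro h i hi
    have := congrArg (fun l => l[i]?) h
    simpa [res, hi] using this
  · intro h
    apply List.ext_getElem (by simp [res_length])
    intro i h1 h2
    rw [res_length] at h1
    rw [res_getElem x h1, res_getElem y h1]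
    exact h i h1

theorem res_take {x : ℕ → ℤ} {n m : ℕ} (h : n ≤ m) : (res x m).take n = res x n := by
  apply List.ext_getElem (by simp [res_length]; omega)
  intro i h1 h2
  simp only [List.getElem_take]
  rw [res_getElem x (by simp [res_length] at h1 ⊢; omega), res_getElem x (by simpa [res_length] using h2)]

theorem res_prefix {x : ℕ → ℤ} {n m : ℕ} (h : n ≤ m) : res x n <+: res x m := by
  rw [← res_take h]; exact List.take_prefix _ _

theorem eq_res_of_prefix {σ : List ℤ} {x : ℕ → ℤ} {m : ℕ} (h : σ <+: res x m) :
    σ = res x σ.length ∧ σ.length ≤ m := by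
  have hlen : σ.length ≤ m := by
    have := h.length_le; rwa [res_length] at this
  refine ⟨?_, hlen⟩
  rw [List.prefix_iff_eq_take] at h
  conv_lhs => rw [h, res_take hlen]

theorem res_succ (x : ℕ → ℤ) (n : ℕ) : res x (n + 1) = res x n ++ [x n] := by
  apply List.ext_getElem (by simp [res_length])
  intro i h1 h2
  rw [res_length] at h1
  rcases Nat.lt_or_ge i n with hi | hi
  · rw [res_getElem x h1, List.getElem_append_left (by simpa [res_length] using hi),
      res_getElem x hi]
  · have : i = n := by omega
    subst this
    rw [res_getElem x h1, List.getElem_append_right (by simp [res_length])]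
    simp [res_length]

theorem res_pointwise {x : ℕ → ℤ} {σ : List ℤ} {n : ℕ} (h : res x n = σ)
    {i : ℕ} (hi : i < n) : x i = σ[i]'(by rw [← h, res_length]; exact hi) := by
  subst h; rw [res_getElem x hi]

theorem res_getD (σ : List ℤ) : res (fun i => σ.getD i 0) σ.length = σ := by
  apply List.ext_getElem (by simp [res_length])
  intro i h1 h2
  rw [res_getElem _ (by simpa [res_length] using h1)]
  simp [List.getD_eq_getElem?_getD, List.getElem?_eq_getElem h2]

theorem mem_cyl_res {w x : ℕ → ℤ} {n : ℕ} : w ∈ cyl (res x n) ↔ ∀ i < n, w i = x i := by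
  rw [cyl, Set.mem_setOf_eq, res_length, res_eq_iff]

theorem self_mem_cyl (x : ℕ → ℤ) (n : ℕ) : x ∈ cyl (res x n) :=
  mem_cyl_res.2 fun _ _ => rfl

theorem cyl_isOpen (x : ℕ → ℤ) (n : ℕ) : IsOpen (cyl (res x n)) := by
  have : cyl (res x n) = ⋂ i ∈ Finset.range n, {w : ℕ → ℤ | w i = x i} := by
    ext w
    simp only [mem_cyl_res, Set.mem_iInter, Set.mem_setOf_eq, Finset.mem_range]
  rw [this]
  refine isOpen_biInter_finset fun i _ => ?_
  have : {w : ℕ → ℤ | w i = x i} = (fun w : ℕ → ℤ => w i) ⁻¹' {x i} := rfl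
  rw [this]
  exact (continuous_apply i).isOpen_preimage _ (isOpen_discrete _)

theorem exists_cyl_subset {U : Set (ℕ → ℤ)} (hU : IsOpen U) {x : ℕ → ℤ} (hx : x ∈ U) :
    ∃ n, cyl (res x n) ⊆ U := by
  obtain ⟨I, u, hu, hsub⟩ := isOpen_pi_iff.1 hU x hx
  refine ⟨(I.sup id) + 1, fun w hw => hsub fun i hi => ?_⟩
  have : w i = x i := mem_cyl_res.1 hw i (by
    have : i ≤ I.sup id := Finset.le_sup (f := id) hi
    omega)
  rw [this]; exact (hu i hi).2

theorem cyl_subset_of_agree {y p : ℕ → ℤ} {n m : ℕ} (hnm : n ≤ m)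
    (hagr : ∀ i < n, y i = p i) : cyl (res y m) ⊆ cyl (res p n) := by
  intro w hw
  rw [mem_cyl_res] at hw ⊢
  intro i hi
  rw [hw i (lt_of_lt_of_le hi hnm), hagr i hi]

/-- Escape lemma: out of a closed nowhere dense set, extending any stem. -/
theorem escape {F : Set (ℕ → ℤ)} (hFc : IsClosed F) (hFn : IsNowhereDense F)
    (x : ℕ → ℤ) (n : ℕ) :
    ∃ y m, n ≤ m ∧ (∀ i < n, y i = x i) ∧ ∀ w ∈ cyl (res y m), w ∉ F := by
  have hd : Dense Fᶜ := by
    have : interior F = ∅ := by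
      have := hFn
      rw [IsNowhereDense, hFc.closure_eq] at this
      exact this
    rwa [← interior_eq_empty_iff_dense_compl]
  obtain ⟨p, hpF, hpc⟩ := hd.exists_mem_open (cyl_isOpen x n) ⟨x, self_mem_cyl x n⟩
  obtain ⟨m, hm⟩ := exists_cyl_subset (hFc.isOpen_compl) hpF
  refine ⟨p, max m n, le_max_right _ _, fun i hi => mem_cyl_res.1 hpc i hi, fun w hw => ?_⟩
  exact hm (cyl_subset_of_agree (le_max_left _ _) (fun _ _ => rfl) hw)

/-- Criterion for nowhere density. -/
theorem nwd_of_escape {S : Set (ℕ → ℤ)}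
    (h : ∀ (x : ℕ → ℤ) (n : ℕ), ∃ (y : ℕ → ℤ) (m : ℕ), n ≤ m ∧ (∀ i < n, y i = x i) ∧
      ∀ w ∈ cyl (res y m), w ∉ S) :
    IsNowhereDense S := by
  rw [IsNowhereDense, Set.eq_empty_iff_forall_notMem]
  intro p hp
  obtain ⟨n, hn⟩ := exists_cyl_subset isOpen_interior hp
  obtain ⟨y, m, hnm, hagr, hesc⟩ := h p n
  have hy : y ∈ closure S := by
    apply interior_subset
    apply hn
    exact mem_cyl_res.2 hagr
  rw [mem_closure_iff] at hy
  obtain ⟨w, hw, hwS⟩ := hy _ (cyl_isOpen y m) (self_mem_cyl y m)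
  exact hesc w hw hwS

/-- Simultaneous escape from a closed nwd set for finitely many translates. -/
theorem killList {F : Set (ℕ → ℤ)} (hFc : IsClosed F) (hFn : IsNowhereDense F) :
    ∀ (bs : List (ℕ → ℤ)) (y : ℕ → ℤ) (m : ℕ),
    ∃ (y' : ℕ → ℤ) (m' : ℕ), m ≤ m' ∧ (∀ i < m, y' i = y i) ∧
      ∀ b ∈ bs, ∃ L ≤ m', ∀ w ∈ cyl (res (y' - b) L), w ∉ F := by
  intro bs
  induction bs with
  | nil => exact fun y m => ⟨y, m, le_refl _, fun _ _ => rfl, by simp⟩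
  | cons b bs ih =>
    intro y m
    obtain ⟨y₁, m₁, hm₁, hagr₁, hesc₁⟩ := escape hFc hFn (y - b) m
    obtain ⟨y', m', hm', hagr', hkills⟩ := ih (y₁ + b) m₁
    refine ⟨y', m', le_trans hm₁ hm', ?_, ?_⟩
    · intro i hi
      rw [hagr' i (lt_of_lt_of_le hi hm₁), Pi.add_apply, hagr₁ i hi, Pi.sub_apply]
      ring
    · intro c hc
      rcases List.mem_cons.1 hc with rfl | hcbs
      · refine ⟨m₁, hm', fun w hw => hesc₁ w ?_⟩
        have : ∀ i < m₁, (y' - c) i = y₁ i := by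
          intro i hi
          rw [Pi.sub_apply, hagr' i hi, Pi.add_apply]; ring
        exact cyl_subset_of_agree (le_refl m₁) this hw
      · obtain ⟨L, hL, hesc⟩ := hkills c hcbs
        refine ⟨L, hL, fun w hw => hesc w ?_⟩
        have : ∀ i < L, (y' - c) i = (y' - c) i := fun _ _ => rfl
        exact hw

theorem nil_mem {T : Set (List ℤ)} (hT : IsPerfect T) : [] ∈ T := by
  obtain ⟨σ, hσ⟩ := hT.2.1
  exact hT.1 σ hσ [] List.nil_prefix

theorem exists_proper_ext {T : Set (List ℤ)} (hT : IsPerfect T) {σ : List ℤ} (hσ : σ ∈ T) :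
    ∃ τ ∈ T, σ <+: τ ∧ σ.length < τ.length := by
  obtain ⟨τ, hτT, hpre, i, j, hij, hi, hj⟩ := hT.2.2 σ hσ
  exact ⟨τ ++ [i], hi, hpre.trans ⟨[i], rfl⟩, by
    have := hpre.length_le; simp; omega⟩

/-- Canonical infinite branch through a node of a perfect tree. -/
theorem exists_branch {T : Set (List ℤ)} (hT : IsPerfect T) {σ : List ℤ} (hσ : σ ∈ T) :
    ∃ z : ℕ → ℤ, (∀ m, res z m ∈ T) ∧ res z σ.length = σ := by
  -- the chain of extensions
  have step : ∀ p : {τ : List ℤ // τ ∈ T}, ∃ q : {τ : List ℤ // τ ∈ T},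
      p.1 <+: q.1 ∧ p.1.length < q.1.length := by
    rintro ⟨τ, hτ⟩
    obtain ⟨ρ, hρ, h1, h2⟩ := exists_proper_ext hT hτ
    exact ⟨⟨ρ, hρ⟩, h1, h2⟩
  choose f hf1 hf2 using step
  let C : ℕ → {τ : List ℤ // τ ∈ T} := fun j => f^[j] ⟨σ, hσ⟩
  have hC0 : C 0 = ⟨σ, hσ⟩ := rfl
  have hCsucc : ∀ j, C (j + 1) = f (C j) := fun j => Function.iterate_succ_apply' f j _
  have hlen : ∀ j, σ.length + j ≤ (C j).1.length := by
    intro j; induction j with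
    | zero => simp [hC0]
    | succ j ih =>
      have := hf2 (C j)
      rw [← hCsucc j] at this
      omega
  have hpre : ∀ j k, j ≤ k → (C j).1 <+: (C k).1 := by
    intro j k hjk
    induction k with
    | zero => simp_all
    | succ k ih =>
      rcases Nat.lt_or_ge j (k+1) with h | h
      · have h1 := ih (by omega)
        have h2 := hf1 (C k)
        rw [← hCsucc k] at h2
        exact h1.trans h2
      · have : j = k + 1 := by omega
        subst this; exact List.prefix_refl _
  refine ⟨fun p => (C (p + 1)).1.getD p 0, ?_, ?_⟩
  · intro m
    have hres : res (fun p => (C (p+1)).1.getD p 0) m = (C m).1.take m := by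
      apply List.ext_getElem (by simp [res_length]; have := hlen m; omega)
      intro i h1 h2
      rw [res_length] at h1
      rw [res_getElem _ h1]
      have hpre' := hpre (i+1) m (by omega)
      have hil : i < (C (i+1)).1.length := by have := hlen (i+1); omega
      rw [List.getElem_take]
      rw [List.getD_eq_getElem _ _ hil]
      exact List.IsPrefix.getElem hpre' _
    rw [hres]
    exact hT.1 _ (C m).2 _ (List.take_prefix _ _)
  · apply List.ext_getElem (by simp [res_length])
    intro i h1 h2
    rw [res_length] at h1
    rw [res_getElem _ h1]
    have hpre' : σ <+: (C (i+1)).1 := by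
      have := hpre 0 (i+1) (by omega); rwa [hC0] at this
    have hil : i < (C (i+1)).1.length := by have := hlen (i+1); omega
    rw [List.getD_eq_getElem _ _ hil]
    exact (List.IsPrefix.getElem hpre' _).symm

/-- State of the fusion construction: a level, a list of recorded splitting
levels, and a finite list of branches of `T` ("current leaves"). -/
structure St where
  lvl : ℕ
  D : List ℕ
  leaves : List (ℕ → ℤ)

/-- One step of the fusion construction. -/
structure Rel (T : Set (List ℤ)) (G : ℕ → Set (ℕ → ℤ)) (e : ℕ → List ℤ × ℕ)
    (k : ℕ) (s s' : St) : Prop where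
  lvlLt : s.lvl < s'.lvl
  ne : s'.leaves ≠ []
  mem : ∀ z ∈ s'.leaves, ∀ m, res z m ∈ T
  cohDown : ∀ z' ∈ s'.leaves, ∃ z ∈ s.leaves, ∀ i < s.lvl, z' i = z i
  cohUp : ∀ z ∈ s.leaves, ∃ z' ∈ s'.leaves, ∀ i < s.lvl, z' i = z i
  split : ∀ z ∈ s.leaves, ∃ z₁ ∈ s'.leaves, ∃ z₂ ∈ s'.leaves,
    (∀ i < s.lvl, z₁ i = z i) ∧ (∀ i < s.lvl, z₂ i = z i) ∧
    ∃ p, s.lvl ≤ p ∧ p < s'.lvl ∧ (∀ i < p, z₁ i = z₂ i) ∧ z₁ p ≠ z₂ p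
  dpre : s.D <+: s'.D
  kills : ∀ j ≤ k, ∃ (y : ℕ → ℤ) (m' : ℕ), (e j).1 <+: res y m' ∧ m' ≤ s'.lvl ∧
    ∀ b ∈ s'.leaves, ∃ L ≤ m', ∀ w ∈ cyl (res (y - b) L), w ∉ G (e j).2

/-- Generic construction of an infinite fusion sequence. -/
theorem buildStages {Inv : St → Prop} {R : ℕ → St → St → Prop} (init : St) (hInit : Inv init)
    (step : ∀ k s, Inv s → ∃ s', Inv s' ∧ R k s s') :
    ∃ st : ℕ → St, st 0 = init ∧ (∀ k, Inv (st k)) ∧ ∀ k, R k (st k) (st (k + 1)) := by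
  choose f hf1 hf2 using step
  let g : ℕ → {s : St // Inv s} := fun k =>
    Nat.rec ⟨init, hInit⟩ (fun k p => ⟨f k p.1 p.2, hf1 k p.1 p.2⟩) k
  exact ⟨fun k => (g k).1, rfl, fun k => (g k).2, fun k => hf2 k (g k).1 (g k).2⟩

section Limit

variable {T : Set (List ℤ)} {G : ℕ → Set (ℕ → ℤ)} {e : ℕ → List ℤ × ℕ}
variable {st : ℕ → St}

/-- The limit tree of a fusion sequence. -/
def limitTree (st : ℕ → St) : Set (List ℤ) :=
  {σ | ∃ k, ∃ z ∈ (st k).leaves, σ <+: res z ((st k).lvl)}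

variable (hRel : ∀ k, Rel T G e k (st k) (st (k + 1)))

include hRel

theorem lvl_mono : ∀ {k K}, k ≤ K → (st k).lvl ≤ (st K).lvl := by
  intro k K h
  induction K with
  | zero => simp_all
  | succ K ih =>
    rcases Nat.lt_or_ge k (K + 1) with h' | h'
    · exact le_trans (ih (by omega)) (le_of_lt (hRel K).lvlLt)
    · have : k = K + 1 := by omega
      subst this; rfl

theorem lvl_ge : ∀ k, k ≤ (st k).lvl := by
  intro k
  induction k with
  | zero => omega
  | succ k ih => have := (hRel k).lvlLt; omega

theorem cohMany : ∀ {k K}, k ≤ K → ∀ z' ∈ (st K).leaves, ∃ z ∈ (st k).leaves,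
    ∀ i < (st k).lvl, z' i = z i := by
  intro k K h
  induction K with
  | zero =>
    have : k = 0 := by omega
    subst this; exact fun z' hz' => ⟨z', hz', fun _ _ => rfl⟩
  | succ K ih =>
    rcases Nat.lt_or_ge k (K + 1) with h' | h'
    · intro z' hz'
      obtain ⟨z, hz, hagr⟩ := (hRel K).cohDown z' hz'
      obtain ⟨z₀, hz₀, hagr₀⟩ := ih (by omega) z hz
      refine ⟨z₀, hz₀, fun i hi => ?_⟩
      rw [hagr i (lt_of_lt_of_le hi (lvl_mono hRel (by omega))), hagr₀ i hi]
    · have : k = K + 1 := by omega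
      subst this; exact fun z' hz' => ⟨z', hz', fun _ _ => rfl⟩

theorem cohUpMany : ∀ {k K}, k ≤ K → ∀ z ∈ (st k).leaves, ∃ z' ∈ (st K).leaves,
    ∀ i < (st k).lvl, z' i = z i := by
  intro k K h
  induction K with
  | zero =>
    have : k = 0 := by omega
    subst this; exact fun z hz => ⟨z, hz, fun _ _ => rfl⟩
  | succ K ih =>
    rcases Nat.lt_or_ge k (K + 1) with h' | h'
    · intro z hz
      obtain ⟨z₁, hz₁, hagr₁⟩ := ih (by omega) z hz
      obtain ⟨z', hz', hagr'⟩ := (hRel K).cohUp z₁ hz₁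
      refine ⟨z', hz', fun i hi => ?_⟩
      rw [hagr' i (lt_of_lt_of_le hi (lvl_mono hRel (by omega))), hagr₁ i hi]
    · have : k = K + 1 := by omega
      subst this; exact fun z hz => ⟨z, hz, fun _ _ => rfl⟩

theorem levelLemma {σ : List ℤ} (hσ : σ ∈ limitTree st) {k : ℕ}
    (hk : σ.length ≤ (st k).lvl) :
    ∃ z ∈ (st k).leaves, σ <+: res z ((st k).lvl) := by
  obtain ⟨k', z', hz', hpre⟩ := hσ
  obtain ⟨hσeq, hσlen⟩ := eq_res_of_prefix hpre
  rcases le_or_gt k' k with h | h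
  · obtain ⟨z, hz, hagr⟩ := cohUpMany hRel h z' hz'
    refine ⟨z, hz, ?_⟩
    have : σ = res z σ.length :=
      hσeq.trans (res_eq_iff.2 (fun i hi => (hagr i (lt_of_lt_of_le hi hσlen)).symm))
    rw [this]; exact res_prefix hk
  · obtain ⟨z, hz, hagr⟩ := cohMany hRel (le_of_lt h) z' hz'
    refine ⟨z, hz, ?_⟩
    have : σ = res z σ.length :=
      hσeq.trans (res_eq_iff.2 (fun i hi => hagr i (lt_of_lt_of_le hi hk)))
    rw [this]; exact res_prefix hk

theorem branchLemma {z : ℕ → ℤ} (hz : z ∈ branches (limitTree st)) (k : ℕ) :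
    ∃ b ∈ (st k).leaves, ∀ i < (st k).lvl, z i = b i := by
  have h1 : res z ((st k).lvl) ∈ limitTree st := hz _
  obtain ⟨b, hb, hpre⟩ := levelLemma hRel h1 (le_of_eq (res_length _ _))
  refine ⟨b, hb, fun i hi => ?_⟩
  have : res z ((st k).lvl) = res b ((st k).lvl) :=
    List.IsPrefix.eq_of_length hpre (by rw [res_length, res_length])
  exact res_eq_iff.1 this i hi

omit hRel in theorem limitTree_subset (hT : IsTree T)
    (hmem : ∀ k, ∀ z ∈ (st k).leaves, ∀ m, res z m ∈ T) : limitTree st ⊆ T := by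
  rintro σ ⟨k, z, hz, hpre⟩
  exact hT _ (hmem k z hz _) _ hpre

omit hRel in theorem limitTree_isTree : IsTree (limitTree st) := by
  rintro σ ⟨k, z, hz, hpre⟩ τ hτ
  exact ⟨k, z, hz, hτ.trans hpre⟩

omit hRel in theorem limitTree_nonempty (hne : ∀ k, (st k).leaves ≠ []) :
    (limitTree st).Nonempty := by
  obtain ⟨z, hz⟩ := List.exists_mem_of_ne_nil _ (hne 0)
  exact ⟨[], 0, z, hz, List.nil_prefix⟩

omit hRel in theorem mem_limitTree_res {z : ℕ → ℤ} {k m : ℕ} (hz : z ∈ (st k).leaves)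
    (hm : m ≤ (st k).lvl) : res z m ∈ limitTree st :=
  ⟨k, z, hz, res_prefix hm⟩

theorem limitTree_perfect (hne : ∀ k, (st k).leaves ≠ []) :
    IsPerfect (limitTree st) := by
  refine ⟨limitTree_isTree, limitTree_nonempty hne, ?_⟩
  -- (omitted vars handled)
  intro σ hσ
  set k := σ.length with hk
  have hσk : σ.length ≤ (st k).lvl := lvl_ge hRel k
  obtain ⟨z, hz, hpre⟩ := levelLemma hRel hσ hσk
  obtain ⟨z₁, hz₁, z₂, hz₂, hagr₁, hagr₂, p, hp1, hp2, hagr, hne'⟩ := (hRel k).split z hz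
  refine ⟨res z₁ p, ?_, ?_, z₁ p, z₂ p, hne', ?_, ?_⟩
  · exact mem_limitTree_res hz₁ (by omega)
  · -- σ <+: res z₁ p
    have hσeq : σ = res z σ.length := (eq_res_of_prefix hpre).1
    have : σ = res z₁ σ.length :=
      hσeq.trans (res_eq_iff.2 (fun i hi => (hagr₁ i (lt_of_lt_of_le hi hσk)).symm))
    rw [this]; exact res_prefix (by omega)
  · rw [← res_succ]
    exact mem_limitTree_res hz₁ (by omega)
  · have : res z₁ p = res z₂ p := res_eq_iff.2 hagr
    rw [this, ← res_succ]
    exact mem_limitTree_res hz₂ (by omega)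

theorem nwdSum (hG : ∀ n, IsClosed (G n) ∧ IsNowhereDense (G n))
    (he : Function.Surjective e) (n₀ : ℕ) :
    IsNowhereDense (G n₀ + branches (limitTree st)) := by
  apply nwd_of_escape
  intro x n
  obtain ⟨j, hj⟩ := he (res x n, n₀)
  obtain ⟨y, m', hpre, hm', hkills⟩ := (hRel j).kills j (le_refl j)
  rw [hj] at hpre hkills
  simp only at hpre hkills
  have hn : n ≤ m' := by
    have := hpre.length_le; rwa [res_length, res_length] at this
  refine ⟨y, m', hn, ?_, ?_⟩
  · intro i hi
    have : res x n = res y n := by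
      obtain ⟨h1, -⟩ := eq_res_of_prefix hpre
      rwa [res_length] at h1
    exact (res_eq_iff.1 this i hi).symm
  · intro w hw hwmem
    obtain ⟨f, hf, z, hz, hfz⟩ := Set.mem_add.1 hwmem
    obtain ⟨b, hb, hagrb⟩ := branchLemma hRel hz (j + 1)
    obtain ⟨L, hL, hesc⟩ := hkills b hb
    apply hesc f
    rw [mem_cyl_res]
    intro i hi
    have hwy : w i = y i := mem_cyl_res.1 hw i (lt_of_lt_of_le hi hL)
    have hzb : z i = b i := hagrb i (lt_of_lt_of_le hi (le_trans hL hm'))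
    have hfw : f i = w i - z i := by
      have := congrFun hfz i
      simp only [Pi.add_apply] at this
      omega
    rw [hfw, hwy, hzb, Pi.sub_apply]
    exact hf

end Limit

/-- Invariant for the plain perfect-tree construction. -/
def Inv1 (T : Set (List ℤ)) (s : St) : Prop :=
  s.leaves ≠ [] ∧ ∀ z ∈ s.leaves, ∀ m, res z m ∈ T

section Steps

variable {T : Set (List ℤ)} {G : ℕ → Set (ℕ → ℤ)} {e : ℕ → List ℤ × ℕ}

theorem splitStepGen (hT : IsPerfect T) (lvl : ℕ) :
    ∀ (l : List (ℕ → ℤ)), (∀ z ∈ l, ∀ m, res z m ∈ T) →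
    ∃ (l' : List (ℕ → ℤ)) (P : ℕ),
      (l ≠ [] → l' ≠ []) ∧
      (∀ z' ∈ l', ∀ m, res z' m ∈ T) ∧
      (∀ z' ∈ l', ∃ z ∈ l, ∀ i < lvl, z' i = z i) ∧
      (∀ z ∈ l, ∃ z₁ ∈ l', ∃ z₂ ∈ l',
        (∀ i < lvl, z₁ i = z i) ∧ (∀ i < lvl, z₂ i = z i) ∧
        ∃ p, lvl ≤ p ∧ p < P ∧ (∀ i < p, z₁ i = z₂ i) ∧ z₁ p ≠ z₂ p) := by
  intro l
  induction l with
  | nil => exact fun _ => ⟨[], lvl + 1, by simp, by simp, by simp, by simp⟩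
  | cons z l ih =>
    intro hmem
    obtain ⟨l'', P'', -, hmem'', hcoh'', hsplit''⟩ := ih (fun z hz => hmem z (by simp [hz]))
    have hσ : res z lvl ∈ T := hmem z (by simp) lvl
    obtain ⟨τ, hτT, hpre, i, j, hij, hiT, hjT⟩ := hT.2.2 _ hσ
    have hlvlτ : lvl ≤ τ.length := by
      have := hpre.length_le; rwa [res_length] at this
    obtain ⟨w₁, hw₁T, hw₁res⟩ := exists_branch hT hiT
    obtain ⟨w₂, hw₂T, hw₂res⟩ := exists_branch hT hjT
    rw [List.length_append, List.length_cons, List.length_nil] at hw₁res hw₂res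
    have hτ1 : res w₁ τ.length = τ := by
      rw [← res_take (Nat.le_succ τ.length), hw₁res]
      exact List.take_left' rfl
    have hτ2 : res w₂ τ.length = τ := by
      rw [← res_take (Nat.le_succ τ.length), hw₂res]
      exact List.take_left' rfl
    have hσtake : τ.take lvl = res z lvl := by
      have := List.prefix_iff_eq_take.1 hpre
      rw [res_length] at this
      exact this.symm
    have hagr₁ : ∀ a < lvl, w₁ a = z a := by
      have h1 : res w₁ lvl = res z lvl := by
        rw [← res_take hlvlτ, hτ1, hσtake]
      intro a ha; exact res_eq_iff.1 h1 a ha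
    have hagr₂ : ∀ a < lvl, w₂ a = z a := by
      have h1 : res w₂ lvl = res z lvl := by
        rw [← res_take hlvlτ, hτ2, hσtake]
      intro a ha; exact res_eq_iff.1 h1 a ha
    have hagr12 : ∀ a < τ.length, w₁ a = w₂ a := by
      intro a ha; exact res_eq_iff.1 (hτ1.trans hτ2.symm) a ha
    have hval1 : w₁ τ.length = i := by
      have e2 := res_succ w₁ τ.length
      rw [hw₁res, hτ1] at e2
      have := List.append_cancel_left e2
      simpa using this.symm
    have hval2 : w₂ τ.length = j := by
      have e2 := res_succ w₂ τ.length
      rw [hw₂res, hτ2] at e2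
      have := List.append_cancel_left e2
      simpa using this.symm
    have hdiff : w₁ τ.length ≠ w₂ τ.length := by rw [hval1, hval2]; exact hij
    refine ⟨w₁ :: w₂ :: l'', max P'' (τ.length + 2), by simp, ?_, ?_, ?_⟩
    · intro z' hz'
      rcases List.mem_cons.1 hz' with rfl | hz'
      · exact hw₁T
      rcases List.mem_cons.1 hz' with rfl | hz'
      · exact hw₂T
      · exact hmem'' z' hz'
    · intro z' hz'
      rcases List.mem_cons.1 hz' with rfl | hz'
      · exact ⟨z, by simp, hagr₁⟩
      rcases List.mem_cons.1 hz' with rfl | hz'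
      · exact ⟨z, by simp, hagr₂⟩
      · obtain ⟨z₀, hz₀, hagr⟩ := hcoh'' z' hz'
        exact ⟨z₀, by simp [hz₀], hagr⟩
    · intro z₀ hz₀
      rcases List.mem_cons.1 hz₀ with rfl | h
      · exact ⟨w₁, by simp, w₂, by simp, hagr₁, hagr₂,
          τ.length, hlvlτ, by omega, hagr12, hdiff⟩
      · obtain ⟨z₁, hz₁, z₂, hz₂, a1, a2, p, hp1, hp2, ha, hd⟩ := hsplit'' z₀ h
        exact ⟨z₁, by simp [hz₁], z₂, by simp [hz₂], a1, a2, p, hp1, by omega, ha, hd⟩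

theorem killsAll (hG : ∀ n, IsClosed (G n) ∧ IsNowhereDense (G n)) (e : ℕ → List ℤ × ℕ)
    (l' : List (ℕ → ℤ)) :
    ∀ k, ∃ B, ∀ j ≤ k, ∃ (y : ℕ → ℤ) (m' : ℕ), (e j).1 <+: res y m' ∧ m' ≤ B ∧
      ∀ b ∈ l', ∃ L ≤ m', ∀ w ∈ cyl (res (y - b) L), w ∉ G (e j).2 := by
  have single : ∀ j, ∃ (y : ℕ → ℤ) (m' : ℕ), (e j).1 <+: res y m' ∧
      ∀ b ∈ l', ∃ L ≤ m', ∀ w ∈ cyl (res (y - b) L), w ∉ G (e j).2 := by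
    intro j
    obtain ⟨y', m', hm', hagr, hkills⟩ :=
      killList (hG (e j).2).1 (hG (e j).2).2 l' (fun a => (e j).1.getD a 0) (e j).1.length
    refine ⟨y', m', ?_, hkills⟩
    have h1 : (e j).1 = res y' (e j).1.length :=
      (res_getD (e j).1).symm.trans
        (res_eq_iff.2 (fun a ha => (hagr a ha).symm))
    conv_lhs => rw [h1]
    exact res_prefix hm'
  intro k
  induction k with
  | zero =>
    obtain ⟨y, m', h1, h2⟩ := single 0
    exact ⟨m', fun j hj => by
      have : j = 0 := by omega
      subst this; exact ⟨y, m', h1, le_refl _, h2⟩⟩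
  | succ k ih =>
    obtain ⟨B, hB⟩ := ih
    obtain ⟨y, m', h1, h2⟩ := single (k + 1)
    refine ⟨max B m', fun j hj => ?_⟩
    rcases Nat.lt_or_ge j (k + 1) with h | h
    · obtain ⟨y₀, m₀, ha, hb, hc⟩ := hB j (by omega)
      exact ⟨y₀, m₀, ha, by omega, hc⟩
    · have : j = k + 1 := by omega
      subst this
      exact ⟨y, m', h1, by omega, h2⟩

theorem stepGeneral (hT : IsPerfect T) (hG : ∀ n, IsClosed (G n) ∧ IsNowhereDense (G n))
    (e : ℕ → List ℤ × ℕ) :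
    ∀ k s, Inv1 T s → ∃ s', Inv1 T s' ∧ Rel T G e k s s' := by
  intro k s hs
  obtain ⟨l', P, hne, hmem, hcoh, hsplit⟩ := splitStepGen hT s.lvl s.leaves hs.2
  obtain ⟨B, hB⟩ := killsAll hG e l' k
  refine ⟨⟨max (max P B) (s.lvl + 1), s.D, l'⟩, ⟨hne hs.1, hmem⟩, ?_⟩
  refine ⟨by show s.lvl < max (max P B) (s.lvl + 1); omega, hne hs.1, hmem, hcoh, ?_, ?_, List.prefix_refl _, ?_⟩
  · intro z hz
    obtain ⟨z₁, hz₁, _, _, a1, _, _⟩ := hsplit z hz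
    exact ⟨z₁, hz₁, a1⟩
  · intro z hz
    obtain ⟨z₁, hz₁, z₂, hz₂, a1, a2, p, hp1, hp2, ha, hd⟩ := hsplit z hz
    exact ⟨z₁, hz₁, z₂, hz₂, a1, a2, p, hp1, by show p < max (max P B) (s.lvl + 1); omega, ha, hd⟩
  · intro j hj
    obtain ⟨y, m', h1, h2, h3⟩ := hB j hj
    exact ⟨y, m', h1, by show m' ≤ max (max P B) (s.lvl + 1); omega, h3⟩

/-- Extra invariant for the uniformly perfect construction: recorded levels are
below the current level; leaves diverge only at recorded levels; and at every
recorded level, every leaf has a pair of leaves splitting there. -/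
def InvU (T : Set (List ℤ)) (s : St) : Prop :=
  Inv1 T s ∧ (∀ n ∈ s.D, n < s.lvl) ∧
  (∀ z ∈ s.leaves, ∀ z' ∈ s.leaves, ∀ n, (∀ i < n, z i = z' i) → z n ≠ z' n → n ∈ s.D) ∧
  (∀ n ∈ s.D, ∀ z ∈ s.leaves, ∃ z₁ ∈ s.leaves, ∃ z₂ ∈ s.leaves,
    (∀ i < n, z₁ i = z i) ∧ (∀ i < n, z₂ i = z i) ∧ z₁ n ≠ z₂ n)

theorem stepUniform (hT : IsUniformlyPerfect T)
    (hG : ∀ n, IsClosed (G n) ∧ IsNowhereDense (G n)) (e : ℕ → List ℤ × ℕ) :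
    ∀ k s, InvU T s → ∃ s', InvU T s' ∧ Rel T G e k s s' := by
  intro k s hs
  obtain ⟨⟨hne, hmem⟩, hDb, hUL, hSR⟩ := hs
  -- find a common splitting level d ≥ s.lvl
  obtain ⟨z₀, hz₀⟩ := List.exists_mem_of_ne_nil _ hne
  obtain ⟨τ, hτT, hτpre, hτsp⟩ := hT.1.2.2 _ (hmem z₀ hz₀ s.lvl)
  set d := τ.length with hd
  have hlvld : s.lvl ≤ d := by
    have := hτpre.length_le; rwa [res_length] at this
  have hall : ∀ σ ∈ T, σ.length = d → Splits T σ := by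
    rcases hT.2 d with h | h
    · exact h
    · exact absurd hτsp (h τ hτT rfl)
  -- canonical pair of branches above each node of length d, as a function of the node
  have key : ∀ σ : List ℤ, ∃ w₁ w₂ : ℕ → ℤ, σ ∈ T → σ.length = d →
      (∀ m, res w₁ m ∈ T) ∧ (∀ m, res w₂ m ∈ T) ∧
      (∀ i (h : i < d), w₁ i = σ.getD i 0) ∧ (∀ i (h : i < d), w₂ i = σ.getD i 0) ∧
      w₁ d ≠ w₂ d := by
    intro σ
    by_cases h : σ ∈ T ∧ σ.length = d
    · obtain ⟨hσT, hσd⟩ := h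
      obtain ⟨i, j, hij, hiT, hjT⟩ := hall σ hσT hσd
      obtain ⟨w₁, hw₁T, hw₁res⟩ := exists_branch hT.1 hiT
      obtain ⟨w₂, hw₂T, hw₂res⟩ := exists_branch hT.1 hjT
      rw [List.length_append, List.length_cons, List.length_nil] at hw₁res hw₂res
      have hτ1 : res w₁ σ.length = σ := by
        rw [← res_take (Nat.le_succ σ.length), hw₁res]
        exact List.take_left' rfl
      have hτ2 : res w₂ σ.length = σ := by
        rw [← res_take (Nat.le_succ σ.length), hw₂res]
        exact List.take_left' rfl
      have hval1 : w₁ σ.length = i := by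
        have e2 := res_succ w₁ σ.length
        rw [hw₁res, hτ1] at e2
        simpa using (List.append_cancel_left e2).symm
      have hval2 : w₂ σ.length = j := by
        have e2 := res_succ w₂ σ.length
        rw [hw₂res, hτ2] at e2
        simpa using (List.append_cancel_left e2).symm
      refine ⟨w₁, w₂, fun _ _ => ⟨hw₁T, hw₂T, ?_, ?_, ?_⟩⟩
      · intro a ha
        rw [← hσd] at ha
        rw [List.getD_eq_getElem _ _ ha]
        exact res_pointwise hτ1 ha
      · intro a ha
        rw [← hσd] at ha
        rw [List.getD_eq_getElem _ _ ha]
        exact res_pointwise hτ2 ha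
      · rw [← hσd, hval1, hval2]; exact hij
    · exact ⟨0, 0, fun h1 h2 => absurd ⟨h1, h2⟩ h⟩
  choose W1 W2 hkey using key
  -- new leaves
  set l' := s.leaves.flatMap (fun z => [W1 (res z d), W2 (res z d)]) with hl'
  have hmem_l' : ∀ z' ∈ l', ∃ z ∈ s.leaves, z' = W1 (res z d) ∨ z' = W2 (res z d) := by
    intro z' hz'
    rw [hl', List.mem_flatMap] at hz'
    obtain ⟨z, hz, hz'mem⟩ := hz'
    rcases List.mem_cons.1 hz'mem with rfl | hz'mem
    · exact ⟨z, hz, Or.inl rfl⟩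
    rcases List.mem_cons.1 hz'mem with rfl | hz'mem
    · exact ⟨z, hz, Or.inr rfl⟩
    · simp at hz'mem
  have hW1mem : ∀ z ∈ s.leaves, W1 (res z d) ∈ l' := by
    intro z hz
    rw [hl', List.mem_flatMap]
    exact ⟨z, hz, by simp⟩
  have hW2mem : ∀ z ∈ s.leaves, W2 (res z d) ∈ l' := by
    intro z hz
    rw [hl', List.mem_flatMap]
    exact ⟨z, hz, by simp⟩
  -- facts about the new leaves, for leaves z of the old state
  have hkey' : ∀ z ∈ s.leaves,
      (∀ m, res (W1 (res z d)) m ∈ T) ∧ (∀ m, res (W2 (res z d)) m ∈ T) ∧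
      (∀ i < d, W1 (res z d) i = z i) ∧ (∀ i < d, W2 (res z d) i = z i) ∧
      W1 (res z d) d ≠ W2 (res z d) d := by
    intro z hz
    obtain ⟨h1, h2, h3, h4, h5⟩ := hkey (res z d) (hmem z hz d) (res_length z d)
    have hg : ∀ i (h : i < d), (res z d).getD i 0 = z i := by
      intro i hi
      rw [List.getD_eq_getElem _ _ (by rw [res_length]; exact hi)]
      exact res_getElem z hi
    exact ⟨h1, h2, fun i hi => (h3 i hi).trans (hg i hi),
      fun i hi => (h4 i hi).trans (hg i hi), h5⟩
  obtain ⟨B, hB⟩ := killsAll hG e l' k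
  refine ⟨⟨max (max (d + 2) B) (s.lvl + 1), s.D ++ [d], l'⟩, ?_, ?_⟩
  · -- InvU for the new state
    refine ⟨⟨?_, ?_⟩, ?_, ?_, ?_⟩
    · -- nonempty
      exact List.ne_nil_of_mem (hW1mem z₀ hz₀)
    · -- membership
      intro z' hz' m
      obtain ⟨z, hz, h | h⟩ := hmem_l' z' hz'
      · exact h ▸ (hkey' z hz).1 m
      · exact h ▸ (hkey' z hz).2.1 m
    · -- D bound
      intro n hn
      rcases List.mem_append.1 hn with h | h
      · have := hDb n h
        show n < max (max (d + 2) B) (s.lvl + 1); omega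
      · have hnd : n = d := by simpa using h
        rw [hnd]
        show d < max (max (d + 2) B) (s.lvl + 1); omega
    · -- UL
      intro za hza zb hzb n hagr hdif
      obtain ⟨z, hz, hza'⟩ := hmem_l' za hza
      obtain ⟨z', hz', hzb'⟩ := hmem_l' zb hzb
      have haz : ∀ i < d, za i = z i := by
        rcases hza' with rfl | rfl
        · exact (hkey' z hz).2.2.1
        · exact (hkey' z hz).2.2.2.1
      have hbz : ∀ i < d, zb i = z' i := by
        rcases hzb' with rfl | rfl
        · exact (hkey' z' hz').2.2.1
        · exact (hkey' z' hz').2.2.2.1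
      rcases Nat.lt_or_ge n d with hnd | hnd
      · -- divergence of the old leaves
        have : n ∈ s.D := by
          apply hUL z hz z' hz' n
          · intro i hi
            rw [← haz i (by omega), ← hbz i (by omega)]
            exact hagr i hi
          · rw [← haz n hnd, ← hbz n hnd]
            exact hdif
        exact List.mem_append.2 (Or.inl this)
      rcases Nat.lt_or_ge d n with hdn | hdn
      · -- impossible: above d the prefixes agree so the functions coincide or differ at d
        exfalso
        have hresz : res z d = res z' d := by
          apply res_eq_iff.2
          intro i hi
          rw [← haz i hi, ← hbz i hi]
          exact hagr i (by omega)
        rw [hresz] at hza'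
        have hWd : W1 (res z' d) d ≠ W2 (res z' d) d := (hkey' z' hz').2.2.2.2
        have hagrd : za d = zb d := hagr d hdn
        rcases hza' with rfl | rfl <;> rcases hzb' with rfl | rfl
        · exact hdif rfl
        · exact hWd hagrd
        · exact hWd hagrd.symm
        · exact hdif rfl
      · -- n = d
        have : n = d := by omega
        subst this
        exact List.mem_append.2 (Or.inr (by simp))
    · -- SplitRec
      intro n hn za hza
      obtain ⟨z, hz, hza'⟩ := hmem_l' za hza
      have haz : ∀ i < d, za i = z i := by
        rcases hza' with rfl | rfl
        · exact (hkey' z hz).2.2.1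
        · exact (hkey' z hz).2.2.2.1
      rcases List.mem_append.1 hn with h | h
      · -- old recorded level, n < s.lvl ≤ d
        have hnd : n < d := lt_of_lt_of_le (hDb n h) hlvld
        obtain ⟨z₁, hz₁, z₂, hz₂, a1, a2, hdif⟩ := hSR n h z hz
        refine ⟨W1 (res z₁ d), hW1mem z₁ hz₁, W1 (res z₂ d), hW1mem z₂ hz₂, ?_, ?_, ?_⟩
        · intro i hi
          rw [(hkey' z₁ hz₁).2.2.1 i (by omega), a1 i hi, haz i (by omega)]
        · intro i hi
          rw [(hkey' z₂ hz₂).2.2.1 i (by omega), a2 i hi, haz i (by omega)]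
        · rw [(hkey' z₁ hz₁).2.2.1 n hnd, (hkey' z₂ hz₂).2.2.1 n hnd]
          exact hdif
      · -- the new level d
        have : n = d := by simpa using h
        subst this
        refine ⟨W1 (res z d), hW1mem z hz, W2 (res z d), hW2mem z hz, ?_, ?_,
          (hkey' z hz).2.2.2.2⟩
        · intro i hi
          rw [(hkey' z hz).2.2.1 i hi, haz i hi]
        · intro i hi
          rw [(hkey' z hz).2.2.2.1 i hi, haz i hi]
  · -- the Rel fields
    refine ⟨by show s.lvl < max (max (d + 2) B) (s.lvl + 1); omega,
      List.ne_nil_of_mem (hW1mem z₀ hz₀), ?_, ?_, ?_, ?_, List.prefix_append _ _, ?_⟩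
    · intro z' hz' m
      obtain ⟨z, hz, h | h⟩ := hmem_l' z' hz'
      · exact h ▸ (hkey' z hz).1 m
      · exact h ▸ (hkey' z hz).2.1 m
    · intro z' hz'
      obtain ⟨z, hz, h | h⟩ := hmem_l' z' hz'
      · exact ⟨z, hz, fun i hi => h ▸ (hkey' z hz).2.2.1 i (by omega)⟩
      · exact ⟨z, hz, fun i hi => h ▸ (hkey' z hz).2.2.2.1 i (by omega)⟩
    · intro z hz
      exact ⟨W1 (res z d), hW1mem z hz,
        fun i hi => (hkey' z hz).2.2.1 i (by omega)⟩
    · intro z hz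
      refine ⟨W1 (res z d), hW1mem z hz, W2 (res z d), hW2mem z hz,
        (fun i hi => (hkey' z hz).2.2.1 i (by omega)),
        (fun i hi => (hkey' z hz).2.2.2.1 i (by omega)),
        d, hlvld, by show d < max (max (d + 2) B) (s.lvl + 1); omega, ?_,
        (hkey' z hz).2.2.2.2⟩
      intro i hi
      rw [(hkey' z hz).2.2.1 i hi, (hkey' z hz).2.2.2.1 i hi]
    · intro j hj
      obtain ⟨y, m', h1, h2, h3⟩ := hB j hj
      exact ⟨y, m', h1, by show m' ≤ max (max (d + 2) B) (s.lvl + 1); omega, h3⟩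

end Steps

section Uniform

variable {T : Set (List ℤ)} {G : ℕ → Set (ℕ → ℤ)} {e : ℕ → List ℤ × ℕ} {st : ℕ → St}
variable (hRel : ∀ k, Rel T G e k (st k) (st (k + 1)))

include hRel

theorem D_mem_mono : ∀ {k K}, k ≤ K → ∀ n ∈ (st k).D, n ∈ (st K).D := by
  intro k K h
  induction K with
  | zero =>
    have : k = 0 := by omega
    subst this; exact fun n hn => hn
  | succ K ih =>
    rcases Nat.lt_or_ge k (K + 1) with h' | h'
    · exact fun n hn => (hRel K).dpre.subset (ih (by omega) n hn)
    · have : k = K + 1 := by omega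
      subst this; exact fun n hn => hn

theorem limitTree_uniformlyPerfect (hInvU : ∀ k, InvU T (st k)) :
    IsUniformlyPerfect (limitTree st) := by
  have hne : ∀ k, (st k).leaves ≠ [] := fun k => (hInvU k).1.1
  refine ⟨limitTree_perfect hRel hne, ?_⟩
  intro n
  by_cases h : ∃ ρ ∈ limitTree st, ρ.length = n ∧ Splits (limitTree st) ρ
  · left
    obtain ⟨ρ₀, hρ₀, hlen₀, c₁, c₂, hc, hm1, hm2⟩ := h
    have hlvl : n + 1 ≤ (st (n + 1)).lvl := lvl_ge hRel (n + 1)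
    have hlen1 : (ρ₀ ++ [c₁]).length = n + 1 := by simp [hlen₀]
    have hlen2 : (ρ₀ ++ [c₂]).length = n + 1 := by simp [hlen₀]
    obtain ⟨z₁, hz₁, hpre₁⟩ := levelLemma hRel hm1 (k := n + 1) (by rw [hlen1]; exact hlvl)
    obtain ⟨z₂, hz₂, hpre₂⟩ := levelLemma hRel hm2 (k := n + 1) (by rw [hlen2]; exact hlvl)
    have he₁ : ρ₀ ++ [c₁] = res z₁ (n + 1) := by
      have := (eq_res_of_prefix hpre₁).1; rwa [hlen1] at this
    have he₂ : ρ₀ ++ [c₂] = res z₂ (n + 1) := by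
      have := (eq_res_of_prefix hpre₂).1; rwa [hlen2] at this
    have hres₁ : res z₁ n = ρ₀ := by
      rw [← res_take (Nat.le_succ n), ← he₁]
      have : ρ₀.length = n := hlen₀
      rw [← this]; exact List.take_left' rfl
    have hres₂ : res z₂ n = ρ₀ := by
      rw [← res_take (Nat.le_succ n), ← he₂]
      have : ρ₀.length = n := hlen₀
      rw [← this]; exact List.take_left' rfl
    have hv₁ : z₁ n = c₁ := by
      have e2 := res_succ z₁ n
      rw [← he₁, hres₁] at e2
      simpa using (List.append_cancel_left e2).symm
    have hv₂ : z₂ n = c₂ := by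
      have e2 := res_succ z₂ n
      rw [← he₂, hres₂] at e2
      simpa using (List.append_cancel_left e2).symm
    have hnD : n ∈ (st (n + 1)).D := by
      apply (hInvU (n + 1)).2.2.1 z₁ hz₁ z₂ hz₂ n
      · exact fun i hi => res_eq_iff.1 (hres₁.trans hres₂.symm) i hi
      · rw [hv₁, hv₂]; exact hc
    -- now every node of length n splits
    intro σ hσ hlen
    obtain ⟨b, hb, hpreb⟩ := levelLemma hRel hσ (k := n + 1) (by rw [hlen]; omega)
    have hσb : σ = res b n := by
      have := (eq_res_of_prefix hpreb).1; rwa [hlen] at this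
    obtain ⟨w₁, hw₁, w₂, hw₂, a1, a2, hdif⟩ := (hInvU (n + 1)).2.2.2 n hnD b hb
    refine ⟨w₁ n, w₂ n, hdif, ?_, ?_⟩
    · have : σ = res w₁ n :=
        hσb.trans (res_eq_iff.2 (fun i hi => (a1 i hi).symm))
      rw [this, ← res_succ]
      exact mem_limitTree_res hw₁ hlvl
    · have : σ = res w₂ n :=
        hσb.trans (res_eq_iff.2 (fun i hi => (a2 i hi).symm))
      rw [this, ← res_succ]
      exact mem_limitTree_res hw₂ hlvl
  · right
    intro σ hσ hlen hsp
    exact h ⟨σ, hσ, hlen, hsp⟩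

end Uniform

theorem meagre_cover {F : Set (ℕ → ℤ)} (hF : IsMeagre F) :
    ∃ G : ℕ → Set (ℕ → ℤ), (∀ n, IsClosed (G n) ∧ IsNowhereDense (G n)) ∧
      F ⊆ ⋃ n, G n := by
  obtain ⟨S, hnwd, hcount, hsub⟩ := isMeagre_iff_countable_union_isNowhereDense.1 hF
  have hcount' : (insert (∅ : Set (ℕ → ℤ)) S).Countable := hcount.insert _
  obtain ⟨f, hf⟩ := Set.Countable.exists_eq_range hcount' (Set.insert_nonempty _ _)
  refine ⟨fun n => closure (f n), fun n => ⟨isClosed_closure, ?_⟩, ?_⟩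
  · have hfn : f n ∈ insert (∅ : Set (ℕ → ℤ)) S := by
      rw [hf]; exact Set.mem_range_self n
    rcases hfn with h | h
    · show IsNowhereDense (closure (f n))
      rw [h]; simp [IsNowhereDense]
    · exact (hnwd _ h).closure
  · intro x hx
    obtain ⟨t, htS, hxt⟩ := hsub hx
    have : t ∈ Set.range f := by rw [← hf]; exact Set.mem_insert_of_mem _ htS
    obtain ⟨n, rfl⟩ := this
    exact Set.mem_iUnion.2 ⟨n, subset_closure hxt⟩

theorem sum_meagre {F : Set (ℕ → ℤ)} {G : ℕ → Set (ℕ → ℤ)} {st : ℕ → St}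
    {T : Set (List ℤ)} {e : ℕ → List ℤ × ℕ}
    (hG : ∀ n, IsClosed (G n) ∧ IsNowhereDense (G n)) (hcov : F ⊆ ⋃ n, G n)
    (he : Function.Surjective e)
    (hRel : ∀ k, Rel T G e k (st k) (st (k + 1))) :
    IsMeagre (F + branches (limitTree st)) := by
  rw [isMeagre_iff_countable_union_isNowhereDense]
  refine ⟨Set.range (fun n => G n + branches (limitTree st)), ?_,
    Set.countable_range _, ?_⟩
  · rintro t ⟨n, rfl⟩
    exact nwdSum hRel hG he n
  · intro y hy
    obtain ⟨a, ha, b, hb, hab⟩ := Set.mem_add.1 hy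
    obtain ⟨n, han⟩ := Set.mem_iUnion.1 (hcov ha)
    exact ⟨G n + branches (limitTree st), ⟨n, rfl⟩, Set.mem_add.2 ⟨a, han, b, hb, hab⟩⟩

theorem mainGeneral (F : Set (ℕ → ℤ)) (T : Set (List ℤ)) (hF : IsMeagre F)
    (hT : IsPerfect T) :
    ∃ T' : Set (List ℤ), T' ⊆ T ∧ IsPerfect T' ∧ IsMeagre (F + branches T') := by
  obtain ⟨G, hG, hcov⟩ := meagre_cover hF
  obtain ⟨e, he⟩ := exists_surjective_nat (List ℤ × ℕ)
  obtain ⟨z₀, hz₀b, -⟩ := exists_branch hT (nil_mem hT)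
  have hInit : Inv1 T ⟨0, [], [z₀]⟩ := by
    refine ⟨by simp, ?_⟩
    intro z hz m
    rw [List.mem_singleton] at hz
    subst hz; exact hz₀b m
  obtain ⟨st, h0, hInv, hRel⟩ := buildStages _ hInit (stepGeneral hT hG e)
  exact ⟨limitTree st,
    limitTree_subset hT.1 (fun k z hz m => (hInv k).2 z hz m),
    limitTree_perfect hRel (fun k => (hInv k).1),
    sum_meagre hG hcov he hRel⟩

theorem mainUniform (F : Set (ℕ → ℤ)) (T : Set (List ℤ)) (hF : IsMeagre F)
    (hT : IsUniformlyPerfect T) :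
    ∃ T' : Set (List ℤ), T' ⊆ T ∧ IsUniformlyPerfect T' ∧
      IsMeagre (F + branches T') := by
  obtain ⟨G, hG, hcov⟩ := meagre_cover hF
  obtain ⟨e, he⟩ := exists_surjective_nat (List ℤ × ℕ)
  obtain ⟨z₀, hz₀b, -⟩ := exists_branch hT.1 (nil_mem hT.1)
  have hInit : InvU T ⟨0, [], [z₀]⟩ := by
    refine ⟨⟨by simp, ?_⟩, by simp, ?_, by simp⟩
    · intro z hz m
      rw [List.mem_singleton] at hz
      subst hz; exact hz₀b m
    · intro z hz z' hz' n hagr hdif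
      rw [List.mem_singleton] at hz hz'
      subst hz; subst hz'
      exact absurd rfl hdif
  obtain ⟨st, h0, hInv, hRel⟩ := buildStages _ hInit (stepUniform hT hG e)
  exact ⟨limitTree st,
    limitTree_subset hT.1.1 (fun k z hz m => (hInv k).1.2 z hz m),
    limitTree_uniformlyPerfect hRel hInv,
    sum_meagre hG hcov he hRel⟩

end Stmt5

/-- For meager `F` and a (uniformly) perfect tree `T` there is a
(uniformly) perfect `T' ⊆ T` with `F + [T']` meager. -/
theorem stmt5 :
    (∀ F : Set (ℕ → ℤ), ∀ T : Set (List ℤ), IsMeagre F → IsPerfect T →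
      ∃ T' : Set (List ℤ), T' ⊆ T ∧ IsPerfect T' ∧ IsMeagre (F + branches T')) ∧
    (∀ F : Set (ℕ → ℤ), ∀ T : Set (List ℤ), IsMeagre F → IsUniformlyPerfect T →
      ∃ T' : Set (List ℤ), T' ⊆ T ∧ IsUniformlyPerfect T' ∧
        IsMeagre (F + branches T')) :=
  ⟨Stmt5.mainGeneral, Stmt5.mainUniform⟩
end
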